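/- arXiv:1703.02512 — 5 statements merged into one kernel-verified Lean document; each statement's English description precedes it below -/
import Mathlib

section
/- There exists a positive constant C, depending only on h, such that for all functions φ, ϕ, ψ on Ω = M×(-h,h) for which the right-hand side is finite (with φ ∈ L²(Ω) and ϕ, ψ ∈ L²(Ω) possessing weak horizontal gradients ∇_Hϕ, ∇_Hψ ∈ L²(Ω)), one has ∫_M (∫_{-h}^h |φ| dz)(∫_{-h}^h |ϕ ψ| dz) dxdy ≤ C ‖φ‖₂ ‖ϕ‖₂^{1/2}(‖ϕ‖₂^{1/2} + ‖∇_Hϕ‖₂^{1/2}) ‖ψ‖₂^{1/2}(‖ψ‖₂^{1/2} + ‖∇_Hψ‖₂^{1/2}). -/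
/-!
For fixed `z`, the values of `g²` on a horizontal segment of `M` differ from their mean by at most
`∫ |∂(g²)| ≤ ∫ 2|g||∇_H g|`. Integrating in `z`, `u(x,y) = ∫ g(x,y,z)² dz` is therefore bounded
both by a function `G(x)` and by a function `F(y)`, each of total integral
`E = ∫_Ω (g² + 2|g||∇_H g|) ≤ ‖g‖₂² + 2‖g‖₂‖∇_H g‖₂`, whence `∫_M u² ≤ ∫_M G(x) F(y) = E²`.
Cauchy–Schwarz in `z` and Hölder with exponents `(2, 4, 4)` on `M` then give
`∫_M (∫|φ|)(∫|ϕψ|) ≤ √(2h) ∫_M u_φ^{1/2} (u_ϕ u_ψ)^{1/2} ≤ √(2h) ‖φ‖₂ ‖u_ϕ‖₂^{1/2} ‖u_ψ‖₂^{1/2}`.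
-/

open MeasureTheory Set

noncomputable section

/-- The horizontal domain `M = (0,1) × (0,1)`. -/
def Msq : Set (ℝ × ℝ) := Set.Ioo (0:ℝ) 1 ×ˢ Set.Ioo (0:ℝ) 1

/-- The domain `Ω = M × (-h, h)`. -/
def Omg (h : ℝ) : Set ((ℝ × ℝ) × ℝ) := Msq ×ˢ Set.Ioo (-h) h

/-- The `L²(Ω)` norm of `f`, written as an iterated integral. -/
def normL2 (h : ℝ) (f : (ℝ × ℝ) → ℝ → ℝ) : ℝ :=
  Real.sqrt (∫ xy in Msq, ∫ z in Set.Ioo (-h) h, (f xy z) ^ 2)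

/-- The `L²(Ω)` norm of the horizontal gradient `∇_H f`. -/
def normGradHL2 (h : ℝ) (f : (ℝ × ℝ) → ℝ → ℝ) : ℝ :=
  Real.sqrt (∫ xy in Msq, ∫ z in Set.Ioo (-h) h, ‖fderiv ℝ (fun p => f p z) xy‖ ^ 2)

section CauchySchwarz

variable {α : Type*} [MeasurableSpace α] {μ : Measure α}

theorem integral_abs_mul_le_sqrt_mul_sqrt {f g : α → ℝ} (hf : MemLp f 2 μ) (hg : MemLp g 2 μ) :
    ∫ x, |f x * g x| ∂μ ≤ √(∫ x, f x ^ 2 ∂μ) * √(∫ x, g x ^ 2 ∂μ) := by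
  have h := integral_mul_norm_le_Lp_mul_Lq Real.HolderConjugate.two_two
    (by simpa using hf) (by simpa using hg)
  simp only [Real.norm_eq_abs, ← abs_mul, ← Real.sqrt_eq_rpow, Real.rpow_two, sq_abs] at h
  exact h

theorem memLp_two_sqrt {a : α → ℝ} (ha0 : ∀ x, 0 ≤ a x) (ha : Integrable a μ) :
    MemLp (fun x => √(a x)) 2 μ :=
  (memLp_two_iff_integrable_sq (Real.continuous_sqrt.comp_aestronglyMeasurable ha.1)).2 <|
    ha.congr <| .of_forall fun x => (Real.sq_sqrt (ha0 x)).symm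

theorem memLp_two_of_integrable_sq {f : α → ℝ} (hf0 : ∀ x, 0 ≤ f x)
    (hf : Integrable (fun x => f x ^ 2) μ) : MemLp f 2 μ := by
  simpa only [Real.sqrt_sq (hf0 _)] using memLp_two_sqrt (fun x => sq_nonneg (f x)) hf

theorem integral_abs_mul_integral_abs_mul_le [IsFiniteMeasure μ] {a b c : α → ℝ}
    (ha : MemLp a 2 μ) (hb : MemLp b 2 μ) (hc : MemLp c 2 μ) :
    (∫ x, |a x| ∂μ) * ∫ x, |b x * c x| ∂μ
      ≤ √(μ.real univ) * (√(∫ x, a x ^ 2 ∂μ) * √((∫ x, b x ^ 2 ∂μ) * ∫ x, c x ^ 2 ∂μ)) := by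
  have ha' : ∫ x, |a x| ∂μ ≤ √(∫ x, a x ^ 2 ∂μ) * √(μ.real univ) := by
    simpa using integral_abs_mul_le_sqrt_mul_sqrt ha (memLp_const (1 : ℝ))
  have hbc := integral_abs_mul_le_sqrt_mul_sqrt hb hc
  rw [← Real.sqrt_mul (integral_nonneg fun _ => sq_nonneg _)] at hbc
  calc (∫ x, |a x| ∂μ) * ∫ x, |b x * c x| ∂μ
      ≤ (√(∫ x, a x ^ 2 ∂μ) * √(μ.real univ)) * √((∫ x, b x ^ 2 ∂μ) * ∫ x, c x ^ 2 ∂μ) :=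
        mul_le_mul ha' hbc (integral_nonneg fun _ => abs_nonneg _) (by positivity)
    _ = _ := by ring

/-- Hölder's inequality with exponents `(2, 4, 4)`. -/
theorem integral_sqrt_mul_sqrt_mul_le {a b c : α → ℝ} (ha0 : ∀ x, 0 ≤ a x)
    (hb0 : ∀ x, 0 ≤ b x) (hc0 : ∀ x, 0 ≤ c x) (ha : Integrable a μ) (hb : MemLp b 2 μ)
    (hc : MemLp c 2 μ) :
    ∫ x, √(a x) * √(b x * c x) ∂μ
      ≤ √(∫ x, a x ∂μ) * √(√(∫ x, b x ^ 2 ∂μ) * √(∫ x, c x ^ 2 ∂μ)) := by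
  have hbc0 : ∀ x, 0 ≤ b x * c x := fun x => mul_nonneg (hb0 x) (hc0 x)
  calc ∫ x, √(a x) * √(b x * c x) ∂μ
      = ∫ x, |√(a x) * √(b x * c x)| ∂μ := by
        simp only [abs_of_nonneg (by positivity : 0 ≤ √(_) * √(_))]
    _ ≤ √(∫ x, √(a x) ^ 2 ∂μ) * √(∫ x, √(b x * c x) ^ 2 ∂μ) :=
        integral_abs_mul_le_sqrt_mul_sqrt (memLp_two_sqrt ha0 ha)
          (memLp_two_sqrt hbc0 (hb.integrable_mul hc))
    _ = √(∫ x, a x ∂μ) * √(∫ x, |b x * c x| ∂μ) := by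
        simp only [Real.sq_sqrt (ha0 _), Real.sq_sqrt (hbc0 _), abs_of_nonneg (hbc0 _)]
    _ ≤ √(∫ x, a x ∂μ) * √(√(∫ x, b x ^ 2 ∂μ) * √(∫ x, c x ^ 2 ∂μ)) := by
        gcongr
        exact integral_abs_mul_le_sqrt_mul_sqrt hb hc

end CauchySchwarz

theorem sqrt_sq_add_two_mul_le {N D : ℝ} (hN : 0 ≤ N) (hD : 0 ≤ D) :
    √(N ^ 2 + 2 * N * D) ≤ √2 * (√N * (√N + √D)) := by
  rw [Real.sqrt_le_left (by positivity), mul_pow, mul_pow, add_sq, Real.sq_sqrt zero_le_two,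
    Real.sq_sqrt hN, Real.sq_sqrt hD]
  have hND : 0 ≤ √N * √D := by positivity
  nlinarith [mul_nonneg hN hND, sq_nonneg N]

theorem le_setAverage_add_integral_abs_deriv {f f' : ℝ → ℝ} {a b x : ℝ} (hx : x ∈ Ioo a b)
    (hf : ∀ t ∈ Ioo a b, HasDerivAt f (f' t) t) (hfi : IntegrableOn f (Ioo a b))
    (hf'i : IntegrableOn f' (Ioo a b)) :
    f x ≤ (⨍ t in Ioo a b, f t) + ∫ t in Ioo a b, |f' t| := by
  have hab : a < b := hx.1.trans hx.2
  -- compare `f x` with a point `x₀` at which `f` is at most its mean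
  obtain ⟨x₀, hx₀, hfx₀⟩ := exists_le_setAverage (by simp [hab]) (by simp) hfi
  have hsub : uIcc x₀ x ⊆ Ioo a b := ordConnected_Ioo.uIcc_subset hx₀ hx
  have hftc : ∫ t in x₀..x, f' t = f x - f x₀ :=
    intervalIntegral.integral_eq_sub_of_hasDerivAt (fun t ht => hf t (hsub ht))
      (intervalIntegrable_iff.2 (hf'i.mono_set (uIoc_subset_uIcc.trans hsub)))
  have hosc : |∫ t in x₀..x, f' t| ≤ ∫ t in Ioo a b, |f' t| :=
    intervalIntegral.norm_integral_le_integral_norm_uIoc.trans <|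
      setIntegral_mono_set hf'i.norm (.of_forall fun _ => norm_nonneg _)
        (uIoc_subset_uIcc.trans hsub).eventuallyLE
  linarith [le_abs_self (∫ t in x₀..x, f' t)]

theorem sq_le_integral_sq_add_two_mul_abs_mul {k D : ℝ → ℝ} (hk : Differentiable ℝ k)
    (hD : ∀ t, |deriv k t| ≤ D t)
    (hi : IntegrableOn (fun t => k t ^ 2 + 2 * |k t| * D t) (Ioo 0 1)) {y : ℝ}
    (hy : y ∈ Ioo (0:ℝ) 1) :
    k y ^ 2 ≤ ∫ t in Ioo (0:ℝ) 1, (k t ^ 2 + 2 * |k t| * D t) := by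
  have hderiv : ∀ t, HasDerivAt (fun t => k t ^ 2) (2 * k t * deriv k t) t := fun t => by
    simpa [mul_comm, mul_left_comm] using (hk t).hasDerivAt.fun_pow 2
  have habs : ∀ t, |2 * k t * deriv k t| ≤ 2 * |k t| * D t := fun t => by
    rw [abs_mul, abs_mul, abs_two]; gcongr; exact hD t
  have hk2 : IntegrableOn (fun t => k t ^ 2) (Ioo 0 1) :=
    hi.mono' (hk.continuous.pow 2).aestronglyMeasurable <| .of_forall fun t => by
      rw [Real.norm_of_nonneg (sq_nonneg _)]
      linarith [(abs_nonneg _).trans (habs t)]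
  have hk2' : IntegrableOn (fun t => 2 * k t * deriv k t) (Ioo 0 1) :=
    hi.mono' ((hk.continuous.measurable.const_mul 2).mul (measurable_deriv k)).aestronglyMeasurable
      <| .of_forall fun t => by
        rw [Real.norm_eq_abs]
        linarith [habs t, sq_nonneg (k t)]
  calc k y ^ 2
      ≤ (⨍ t in Ioo 0 1, k t ^ 2) + ∫ t in Ioo 0 1, |2 * k t * deriv k t| :=
        le_setAverage_add_integral_abs_deriv hy (fun t _ => hderiv t) hk2 hk2'
    _ = ∫ t in Ioo 0 1, (k t ^ 2 + |2 * k t * deriv k t|) := by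
        rw [setAverage_eq, integral_add hk2 hk2'.abs]; simp
    _ ≤ ∫ t in Ioo (0:ℝ) 1, (k t ^ 2 + 2 * |k t| * D t) :=
        setIntegral_mono (hk2.add hk2'.abs) hi fun t => by linarith [habs t]

section Partial

variable {E F : Type*} [NormedAddCommGroup E] [NormedSpace ℝ E] [NormedAddCommGroup F]
  [NormedSpace ℝ F]

theorem norm_deriv_fst_le_norm_fderiv {f : ℝ × E → F} {x : ℝ} {y : E}
    (hf : DifferentiableAt ℝ f (x, y)) :
    ‖deriv (fun t => f (t, y)) x‖ ≤ ‖fderiv ℝ f (x, y)‖ := by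
  have h : HasDerivAt (fun t => f (t, y)) (fderiv ℝ f (x, y) (1, 0)) x :=
    hf.hasFDerivAt.comp_hasDerivAt x ((hasDerivAt_id x).prodMk (hasDerivAt_const x y))
  rw [h.deriv]
  exact ((fderiv ℝ f (x, y)).le_opNorm _).trans (by simp)

theorem norm_deriv_snd_le_norm_fderiv {f : E × ℝ → F} {x : E} {y : ℝ}
    (hf : DifferentiableAt ℝ f (x, y)) :
    ‖deriv (fun t => f (x, t)) y‖ ≤ ‖fderiv ℝ f (x, y)‖ := by
  have h : HasDerivAt (fun t => f (x, t)) (fderiv ℝ f (x, y) (0, 1)) y :=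
    hf.hasFDerivAt.comp_hasDerivAt y ((hasDerivAt_const y x).prodMk (hasDerivAt_id y))
  rw [h.deriv]
  exact ((fderiv ℝ f (x, y)).le_opNorm _).trans (by simp)

end Partial

section Products

variable {α β γ E : Type*} [MeasurableSpace α] [MeasurableSpace β] [MeasurableSpace γ]
  [NormedAddCommGroup E] {μ : Measure α} {ν : Measure β} {τ : Measure γ}

theorem MeasureTheory.Integrable.prodAssoc_symm [SFinite ν] [SFinite τ] {f : (α × β) × γ → E}
    (hf : Integrable f ((μ.prod ν).prod τ)) :
    Integrable (fun q : α × β × γ => f ((q.1, q.2.1), q.2.2)) (μ.prod (ν.prod τ)) :=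
  ((measurePreserving_prodAssoc μ ν τ).symm _).integrable_comp_of_integrable hf

theorem integral_integral_prodAssoc [NormedSpace ℝ E] [SFinite μ] [SFinite ν]
    [SFinite τ] {f : (α × β) × γ → E} (hf : Integrable f ((μ.prod ν).prod τ)) :
    ∫ x, ∫ p, f ((x, p.1), p.2) ∂(ν.prod τ) ∂μ = ∫ q, f q ∂((μ.prod ν).prod τ) :=
  (integral_prod _ hf.prodAssoc_symm).symm.trans
    (((measurePreserving_prodAssoc μ ν τ).symm _).integral_comp
      MeasurableEquiv.prodAssoc.symm.measurableEmbedding f)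

theorem measurePreserving_prodComm_prodCongr [SFinite μ] [SFinite ν] [SFinite τ] :
    MeasurePreserving (MeasurableEquiv.prodComm.prodCongr (.refl γ))
      ((μ.prod ν).prod τ) ((ν.prod μ).prod τ) :=
  Measure.measurePreserving_swap.prod (.id τ)

theorem memLp_two_of_sq_le_mul_prod {u : α × β → ℝ} {F : α → ℝ} {G : β → ℝ}
    (hu : AEStronglyMeasurable u (μ.prod ν)) (hF : Integrable F μ) (hG : Integrable G ν)
    (huFG : ∀ᵐ q ∂(μ.prod ν), u q ^ 2 ≤ F q.1 * G q.2) : MemLp u 2 (μ.prod ν) :=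
  (memLp_two_iff_integrable_sq hu).2 <| (hF.mul_prod hG).mono' (hu.pow 2) <| by
    filter_upwards [huFG] with q hq
    rwa [Real.norm_of_nonneg (sq_nonneg _)]

theorem integral_sq_le_of_sq_le_mul_prod [SFinite μ] [SFinite ν] {u : α × β → ℝ} {F : α → ℝ}
    {G : β → ℝ}
    (hu : AEStronglyMeasurable u (μ.prod ν)) (hF : Integrable F μ) (hG : Integrable G ν)
    (huFG : ∀ᵐ q ∂(μ.prod ν), u q ^ 2 ≤ F q.1 * G q.2) :
    ∫ q, u q ^ 2 ∂(μ.prod ν) ≤ (∫ x, F x ∂μ) * ∫ y, G y ∂ν :=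
  (integral_mono_ae (memLp_two_of_sq_le_mul_prod hu hF hG huFG).integrable_sq
    (hF.mul_prod hG) huFG).trans_eq (integral_prod_mul F G)

theorem ae_memLp_two_prodMk_left [SFinite μ] [SFinite ν] {f : α → β → ℝ}
    (hm : Measurable fun q : α × β => f q.1 q.2)
    (hf : Integrable (fun q : α × β => f q.1 q.2 ^ 2) (μ.prod ν)) :
    ∀ᵐ x ∂μ, MemLp (f x) 2 ν := by
  filter_upwards [hf.prod_right_ae] with x hx
  exact (memLp_two_iff_integrable_sq (hm.comp measurable_prodMk_left).aestronglyMeasurable).2 hx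

end Products

section SqDensity

variable {α Z : Type*} [MeasurableSpace α] [MeasurableSpace Z]

/-- With `D ≥ |∂v|`, this dominates `v² + |∂(v²)|`. -/
def sqDensity (v D : α → Z → ℝ) (q : α × Z) : ℝ :=
  v q.1 q.2 ^ 2 + 2 * |v q.1 q.2| * D q.1 q.2

theorem integrable_sqDensity {ρ : Measure (α × Z)} {v D : α → Z → ℝ}
    (hv : MemLp (fun q => v q.1 q.2) 2 ρ) (hD : MemLp (fun q => D q.1 q.2) 2 ρ) :
    Integrable (sqDensity v D) ρ :=
  hv.integrable_sq.add <| ((hv.integrable_mul hD).abs.const_mul 2).mono'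
    (((continuous_abs.comp_aestronglyMeasurable hv.1).const_mul 2).mul hD.1) <|
      .of_forall fun q => by
        simp only [Pi.mul_apply, Real.norm_eq_abs, abs_mul, abs_two, abs_abs, mul_assoc, le_refl]

theorem integral_sqDensity_le {ρ : Measure (α × Z)} {v D : α → Z → ℝ}
    (hv : MemLp (fun q => v q.1 q.2) 2 ρ) (hD : MemLp (fun q => D q.1 q.2) 2 ρ) :
    ∫ q, sqDensity v D q ∂ρ ≤ √(∫ q, v q.1 q.2 ^ 2 ∂ρ) ^ 2
      + 2 * √(∫ q, v q.1 q.2 ^ 2 ∂ρ) * √(∫ q, D q.1 q.2 ^ 2 ∂ρ) := by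
  have hvD : Integrable (fun q => 2 * |v q.1 q.2 * D q.1 q.2|) ρ :=
    (hv.integrable_mul hD).abs.const_mul 2
  calc ∫ q, sqDensity v D q ∂ρ
      ≤ ∫ q, (v q.1 q.2 ^ 2 + 2 * |v q.1 q.2 * D q.1 q.2|) ∂ρ :=
        integral_mono (integrable_sqDensity hv hD) (hv.integrable_sq.add hvD) fun q => by
          simp only [sqDensity, abs_mul, mul_assoc]; gcongr; exact le_abs_self _
    _ = (∫ q, v q.1 q.2 ^ 2 ∂ρ) + 2 * ∫ q, |v q.1 q.2 * D q.1 q.2| ∂ρ := by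
        rw [integral_add hv.integrable_sq hvD, integral_const_mul]
    _ ≤ _ := by
        rw [Real.sq_sqrt (integral_nonneg fun _ => sq_nonneg _), mul_assoc]
        gcongr
        exact integral_abs_mul_le_sqrt_mul_sqrt hv hD

end SqDensity

section Ladyzhenskaya

variable {X Z : Type*} [MeasurableSpace X] [MeasurableSpace Z] {μ : Measure X} {ν : Measure Z}
  [SFinite μ] [SFinite ν]

theorem ae_forall_integral_sq_le_integral_sqDensity {v D : X × ℝ → Z → ℝ}
    (hv : ∀ x z, Differentiable ℝ fun y => v (x, y) z)
    (hD : ∀ x y z, |deriv (fun t => v (x, t) z) y| ≤ D (x, y) z)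
    (hW : Integrable (sqDensity v D) ((μ.prod (volume.restrict (Ioo 0 1))).prod ν)) :
    ∀ᵐ x ∂μ, ∀ y ∈ Ioo (0:ℝ) 1, ∫ z, v (x, y) z ^ 2 ∂ν ≤
      ∫ p, sqDensity v D ((x, p.1), p.2) ∂((volume.restrict (Ioo 0 1)).prod ν) := by
  filter_upwards [hW.prodAssoc_symm.prod_right_ae] with x hx
  intro y hy
  have hline : ∀ᵐ z ∂ν, v (x, y) z ^ 2 ≤
      ∫ t in Ioo (0:ℝ) 1, sqDensity v D ((x, t), z) := by
    filter_upwards [hx.prod_left_ae] with z hz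
    exact sq_le_integral_sq_add_two_mul_abs_mul (hv x z) (hD x · z) hz hy
  calc ∫ z, v (x, y) z ^ 2 ∂ν
      ≤ ∫ z, (∫ t in Ioo (0:ℝ) 1, sqDensity v D ((x, t), z)) ∂ν :=
        integral_mono_of_nonneg (.of_forall fun _ => sq_nonneg _) hx.integral_prod_right hline
    _ = _ := (integral_prod_symm _ hx).symm

def normGradH (g : ℝ × ℝ → Z → ℝ) (xy : ℝ × ℝ) (z : Z) : ℝ :=
  ‖fderiv ℝ (fun p => g p z) xy‖

theorem restrict_Msq : (volume : Measure (ℝ × ℝ)).restrict Msq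
    = (volume.restrict (Ioo (0:ℝ) 1)).prod (volume.restrict (Ioo (0:ℝ) 1)) := by
  rw [Msq, Measure.volume_eq_prod, ← Measure.prod_restrict]

theorem ae_sq_integral_sq_le_mul {g : ℝ × ℝ → Z → ℝ} (hd : ∀ z, Differentiable ℝ fun p => g p z)
    (hW : Integrable (sqDensity g (normGradH g))
      (((volume.restrict (Ioo 0 1)).prod (volume.restrict (Ioo 0 1))).prod ν)) :
    ∀ᵐ q ∂((volume.restrict (Ioo 0 1)).prod (volume.restrict (Ioo 0 1))),
      (∫ z, g q z ^ 2 ∂ν) ^ 2 ≤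
        (∫ p, sqDensity g (normGradH g) ((q.1, p.1), p.2) ∂((volume.restrict (Ioo 0 1)).prod ν)) *
          ∫ p, sqDensity g (normGradH g) ((p.1, q.2), p.2)
            ∂((volume.restrict (Ioo 0 1)).prod ν) := by
  have hx := ae_forall_integral_sq_le_integral_sqDensity
    (fun x z => (hd z).comp ((differentiable_const x).prodMk differentiable_id))
    (fun x y z => (Real.norm_eq_abs _).symm.trans_le (norm_deriv_snd_le_norm_fderiv (hd z (x, y))))
    hW
  have hy := ae_forall_integral_sq_le_integral_sqDensity (v := fun p => g p.swap)
    (D := fun p => normGradH g p.swap)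
    (fun y z => (hd z).comp (differentiable_id.prodMk (differentiable_const y)))
    (fun y x z => (Real.norm_eq_abs _).symm.trans_le (norm_deriv_fst_le_norm_fderiv (hd z (x, y))))
    (measurePreserving_prodComm_prodCongr.integrable_comp_of_integrable hW)
  filter_upwards [Measure.quasiMeasurePreserving_fst.ae hx,
    Measure.quasiMeasurePreserving_snd.ae hy,
    Measure.quasiMeasurePreserving_fst.ae (ae_restrict_mem measurableSet_Ioo),
    Measure.quasiMeasurePreserving_snd.ae (ae_restrict_mem measurableSet_Ioo)]
    with q hqx hqy hq1 hq2
  have h1 : ∫ z, g q z ^ 2 ∂ν ≤ _ := hqx q.2 hq2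
  have h2 : ∫ z, g q z ^ 2 ∂ν ≤ _ := hqy q.1 hq1
  have h0 : 0 ≤ ∫ z, g q z ^ 2 ∂ν := integral_nonneg fun _ => sq_nonneg _
  rw [sq]
  exact mul_le_mul h1 h2 h0 (h0.trans h1)

theorem memLp_integral_sq_and_integral_sq_le {g : ℝ × ℝ → Z → ℝ}
    (hm : Measurable fun q : (ℝ × ℝ) × Z => g q.1 q.2) (hd : ∀ z, Differentiable ℝ fun p => g p z)
    (hW : Integrable (sqDensity g (normGradH g)) ((volume.restrict Msq).prod ν)) :
    MemLp (fun xy => ∫ z, g xy z ^ 2 ∂ν) 2 (volume.restrict Msq) ∧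
      ∫ xy in Msq, (∫ z, g xy z ^ 2 ∂ν) ^ 2
        ≤ (∫ q, sqDensity g (normGradH g) q ∂((volume.restrict Msq).prod ν)) ^ 2 := by
  rw [restrict_Msq] at hW ⊢
  have hswap := measurePreserving_prodComm_prodCongr (μ := volume.restrict (Ioo (0:ℝ) 1))
    (ν := volume.restrict (Ioo (0:ℝ) 1)) (τ := ν)
  have hW' := hswap.integrable_comp_of_integrable hW
  have hu : AEStronglyMeasurable (fun xy => ∫ z, g xy z ^ 2 ∂ν)
      ((volume.restrict (Ioo 0 1)).prod (volume.restrict (Ioo 0 1))) :=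
    (hm.pow_const 2).stronglyMeasurable.integral_prod_right'.aestronglyMeasurable
  have hae := ae_sq_integral_sq_le_mul hd hW
  have hF := hW.prodAssoc_symm.integral_prod_left
  have hG := hW'.prodAssoc_symm.integral_prod_left
  refine ⟨memLp_two_of_sq_le_mul_prod hu hF hG hae,
    (integral_sq_le_of_sq_le_mul_prod hu hF hG hae).trans_eq ?_⟩
  rw [integral_integral_prodAssoc hW, integral_integral_prodAssoc hW', sq]
  exact congrArg _ (hswap.integral_comp' _)

end Ladyzhenskaya

section Trilinear

variable {X Z : Type*} [MeasurableSpace X] [MeasurableSpace Z] {μ : Measure X} {ν : Measure Z}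
  [IsFiniteMeasure ν]

theorem integral_integral_abs_mul_integral_abs_mul_le_sqrt [SFinite μ] {φ ϕ ψ : X → Z → ℝ}
    (hmφ : Measurable fun q : X × Z => φ q.1 q.2) (hmϕ : Measurable fun q : X × Z => ϕ q.1 q.2)
    (hmψ : Measurable fun q : X × Z => ψ q.1 q.2)
    (hφ : Integrable (fun q : X × Z => φ q.1 q.2 ^ 2) (μ.prod ν))
    (hϕ : Integrable (fun q : X × Z => ϕ q.1 q.2 ^ 2) (μ.prod ν))
    (hψ : Integrable (fun q : X × Z => ψ q.1 q.2 ^ 2) (μ.prod ν))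
    (hϕ2 : MemLp (fun x => ∫ z, ϕ x z ^ 2 ∂ν) 2 μ) (hψ2 : MemLp (fun x => ∫ z, ψ x z ^ 2 ∂ν) 2 μ) :
    ∫ x, (∫ z, |φ x z| ∂ν) * (∫ z, |ϕ x z * ψ x z| ∂ν) ∂μ
      ≤ √(ν.real univ) * (√(∫ q, φ q.1 q.2 ^ 2 ∂(μ.prod ν)) *
        √(√(∫ x, (∫ z, ϕ x z ^ 2 ∂ν) ^ 2 ∂μ) * √(∫ x, (∫ z, ψ x z ^ 2 ∂ν) ^ 2 ∂μ))) := by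
  have hu0 : ∀ (g : X → Z → ℝ) x, 0 ≤ ∫ z, g x z ^ 2 ∂ν :=
    fun g x => integral_nonneg fun _ => sq_nonneg _
  have hφ1 : Integrable (fun x => ∫ z, φ x z ^ 2 ∂ν) μ := hφ.integral_prod_left
  have hfiber : ∀ᵐ x ∂μ,
      (∫ z, |φ x z| ∂ν) * ∫ z, |ϕ x z * ψ x z| ∂ν ≤ √(ν.real univ) *
        (√(∫ z, φ x z ^ 2 ∂ν) * √((∫ z, ϕ x z ^ 2 ∂ν) * ∫ z, ψ x z ^ 2 ∂ν)) := by
    filter_upwards [ae_memLp_two_prodMk_left hmφ hφ, ae_memLp_two_prodMk_left hmϕ hϕ,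
      ae_memLp_two_prodMk_left hmψ hψ] with x h1 h2 h3
    exact integral_abs_mul_integral_abs_mul_le h1 h2 h3
  have hmaj : Integrable (fun x => √(∫ z, φ x z ^ 2 ∂ν) *
      √((∫ z, ϕ x z ^ 2 ∂ν) * ∫ z, ψ x z ^ 2 ∂ν)) μ :=
    (memLp_two_sqrt (hu0 φ) hφ1).integrable_mul
      (memLp_two_sqrt (fun x => mul_nonneg (hu0 ϕ x) (hu0 ψ x)) (hϕ2.integrable_mul hψ2))
  calc ∫ x, (∫ z, |φ x z| ∂ν) * (∫ z, |ϕ x z * ψ x z| ∂ν) ∂μ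
      ≤ ∫ x, √(ν.real univ) *
          (√(∫ z, φ x z ^ 2 ∂ν) * √((∫ z, ϕ x z ^ 2 ∂ν) * ∫ z, ψ x z ^ 2 ∂ν)) ∂μ :=
        integral_mono_of_nonneg (.of_forall fun _ => by positivity) (hmaj.const_mul _) hfiber
    _ ≤ √(ν.real univ) * (√(∫ x, ∫ z, φ x z ^ 2 ∂ν ∂μ) *
          √(√(∫ x, (∫ z, ϕ x z ^ 2 ∂ν) ^ 2 ∂μ) * √(∫ x, (∫ z, ψ x z ^ 2 ∂ν) ^ 2 ∂μ))) := by
        rw [integral_const_mul]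
        gcongr
        exact integral_sqrt_mul_sqrt_mul_le (hu0 φ) (hu0 ϕ) (hu0 ψ) hφ1 hϕ2 hψ2
    _ = _ := by rw [integral_integral hφ]

theorem integral_integral_abs_mul_integral_abs_mul_le {φ ϕ ψ : ℝ × ℝ → Z → ℝ}
    (hmφ : Measurable fun q : (ℝ × ℝ) × Z => φ q.1 q.2)
    (hmϕ : Measurable fun q : (ℝ × ℝ) × Z => ϕ q.1 q.2)
    (hmψ : Measurable fun q : (ℝ × ℝ) × Z => ψ q.1 q.2)
    (hdϕ : ∀ z, Differentiable ℝ fun p => ϕ p z) (hdψ : ∀ z, Differentiable ℝ fun p => ψ p z)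
    (hφ : Integrable (fun q : (ℝ × ℝ) × Z => φ q.1 q.2 ^ 2) ((volume.restrict Msq).prod ν))
    (hϕ : Integrable (fun q : (ℝ × ℝ) × Z => ϕ q.1 q.2 ^ 2) ((volume.restrict Msq).prod ν))
    (hψ : Integrable (fun q : (ℝ × ℝ) × Z => ψ q.1 q.2 ^ 2) ((volume.restrict Msq).prod ν))
    (hgϕ : Integrable (fun q : (ℝ × ℝ) × Z => normGradH ϕ q.1 q.2 ^ 2)
      ((volume.restrict Msq).prod ν))
    (hgψ : Integrable (fun q : (ℝ × ℝ) × Z => normGradH ψ q.1 q.2 ^ 2)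
      ((volume.restrict Msq).prod ν)) :
    ∫ xy in Msq, (∫ z, |φ xy z| ∂ν) * ∫ z, |ϕ xy z * ψ xy z| ∂ν
      ≤ √(ν.real univ) * √(∫ q, φ q.1 q.2 ^ 2 ∂((volume.restrict Msq).prod ν))
        * √(∫ q, sqDensity ϕ (normGradH ϕ) q ∂((volume.restrict Msq).prod ν))
        * √(∫ q, sqDensity ψ (normGradH ψ) q ∂((volume.restrict Msq).prod ν)) := by
  have hE0 : ∀ g : ℝ × ℝ → Z → ℝ,
      0 ≤ ∫ q, sqDensity g (normGradH g) q ∂((volume.restrict Msq).prod ν) :=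
    fun g => integral_nonneg fun q => by unfold sqDensity normGradH; positivity
  obtain ⟨hLϕ, hϕ2⟩ := memLp_integral_sq_and_integral_sq_le hmϕ hdϕ <| integrable_sqDensity
    ((memLp_two_iff_integrable_sq hmϕ.aestronglyMeasurable).2 hϕ)
    (memLp_two_of_integrable_sq (fun _ => norm_nonneg _) hgϕ)
  obtain ⟨hLψ, hψ2⟩ := memLp_integral_sq_and_integral_sq_le hmψ hdψ <| integrable_sqDensity
    ((memLp_two_iff_integrable_sq hmψ.aestronglyMeasurable).2 hψ)
    (memLp_two_of_integrable_sq (fun _ => norm_nonneg _) hgψ)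
  refine (integral_integral_abs_mul_integral_abs_mul_le_sqrt hmφ hmϕ hmψ hφ hϕ hψ hLϕ hLψ).trans ?_
  rw [mul_assoc, mul_assoc, ← Real.sqrt_mul (hE0 ϕ)]
  gcongr
  exacts [hE0 ϕ, (Real.sqrt_le_left (hE0 ϕ)).2 hϕ2, (Real.sqrt_le_left (hE0 ψ)).2 hψ2]

end Trilinear

section Slab

variable {h : ℝ}

theorem restrict_Omg : (volume : Measure ((ℝ × ℝ) × ℝ)).restrict (Omg h)
    = (volume.restrict Msq).prod (volume.restrict (Ioo (-h) h)) := by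
  rw [Omg, Measure.volume_eq_prod, ← Measure.prod_restrict]

theorem normL2_eq {g : ℝ × ℝ → ℝ → ℝ} (hg : Integrable (fun q : (ℝ × ℝ) × ℝ => g q.1 q.2 ^ 2)
      ((volume.restrict Msq).prod (volume.restrict (Ioo (-h) h)))) :
    normL2 h g = √(∫ q, g q.1 q.2 ^ 2
      ∂((volume.restrict Msq).prod (volume.restrict (Ioo (-h) h)))) := by
  rw [normL2, integral_integral hg]

theorem normGradHL2_eq {g : ℝ × ℝ → ℝ → ℝ}
    (hg : Integrable (fun q : (ℝ × ℝ) × ℝ => normGradH g q.1 q.2 ^ 2)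
      ((volume.restrict Msq).prod (volume.restrict (Ioo (-h) h)))) :
    normGradHL2 h g = √(∫ q, normGradH g q.1 q.2 ^ 2
      ∂((volume.restrict Msq).prod (volume.restrict (Ioo (-h) h)))) := by
  rw [normGradHL2]
  congr 1
  exact integral_integral (f := fun xy z => normGradH g xy z ^ 2) hg

theorem sqrt_integral_sqDensity_le {g : ℝ × ℝ → ℝ → ℝ}
    (hm : Measurable fun q : (ℝ × ℝ) × ℝ => g q.1 q.2)
    (hg : Integrable (fun q : (ℝ × ℝ) × ℝ => g q.1 q.2 ^ 2)
      ((volume.restrict Msq).prod (volume.restrict (Ioo (-h) h))))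
    (hgg : Integrable (fun q : (ℝ × ℝ) × ℝ => normGradH g q.1 q.2 ^ 2)
      ((volume.restrict Msq).prod (volume.restrict (Ioo (-h) h)))) :
    √(∫ q, sqDensity g (normGradH g) q ∂((volume.restrict Msq).prod (volume.restrict (Ioo (-h) h))))
      ≤ √2 * (√(normL2 h g) * (√(normL2 h g) + √(normGradHL2 h g))) := by
  rw [normL2_eq hg, normGradHL2_eq hgg]
  exact (Real.sqrt_le_sqrt (integral_sqDensity_le
    ((memLp_two_iff_integrable_sq hm.aestronglyMeasurable).2 hg)
    (memLp_two_of_integrable_sq (fun _ => norm_nonneg _) hgg))).trans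
    (sqrt_sq_add_two_mul_le (Real.sqrt_nonneg _) (Real.sqrt_nonneg _))

end Slab

/-- There exists a positive constant `C`, depending only on `h`, such that for all
functions `φ, ϕ, ψ` on `Ω = M × (-h,h)` for which the right-hand side is finite (with
`φ ∈ L²(Ω)` and `ϕ, ψ ∈ L²(Ω)` possessing horizontal gradients `∇_H ϕ, ∇_H ψ ∈ L²(Ω)`),
one has
`∫_M (∫_{-h}^h |φ| dz)(∫_{-h}^h |ϕ ψ| dz) dxdy
  ≤ C ‖φ‖₂ ‖ϕ‖₂^{1/2}(‖ϕ‖₂^{1/2} + ‖∇_H ϕ‖₂^{1/2}) ‖ψ‖₂^{1/2}(‖ψ‖₂^{1/2} + ‖∇_H ψ‖₂^{1/2})`. -/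
theorem statement0 (h : ℝ) (hh : 0 < h) :
    ∃ C : ℝ, 0 < C ∧
      ∀ φ ϕ ψ : (ℝ × ℝ) → ℝ → ℝ,
        Measurable (fun q : (ℝ × ℝ) × ℝ => φ q.1 q.2) →
        Measurable (fun q : (ℝ × ℝ) × ℝ => ϕ q.1 q.2) →
        Measurable (fun q : (ℝ × ℝ) × ℝ => ψ q.1 q.2) →
        (∀ z : ℝ, Differentiable ℝ (fun p => ϕ p z)) →
        (∀ z : ℝ, Differentiable ℝ (fun p => ψ p z)) →
        IntegrableOn (fun q : (ℝ × ℝ) × ℝ => (φ q.1 q.2) ^ 2) (Omg h) →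
        IntegrableOn (fun q : (ℝ × ℝ) × ℝ => (ϕ q.1 q.2) ^ 2) (Omg h) →
        IntegrableOn (fun q : (ℝ × ℝ) × ℝ => (ψ q.1 q.2) ^ 2) (Omg h) →
        IntegrableOn (fun q : (ℝ × ℝ) × ℝ => ‖fderiv ℝ (fun p => ϕ p q.2) q.1‖ ^ 2) (Omg h) →
        IntegrableOn (fun q : (ℝ × ℝ) × ℝ => ‖fderiv ℝ (fun p => ψ p q.2) q.1‖ ^ 2) (Omg h) →
        (∫ xy in Msq,
            (∫ z in Set.Ioo (-h) h, |φ xy z|) * (∫ z in Set.Ioo (-h) h, |ϕ xy z * ψ xy z|))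
          ≤ C * normL2 h φ *
              (normL2 h ϕ) ^ ((1:ℝ)/2) *
              ((normL2 h ϕ) ^ ((1:ℝ)/2) + (normGradHL2 h ϕ) ^ ((1:ℝ)/2)) *
              (normL2 h ψ) ^ ((1:ℝ)/2) *
              ((normL2 h ψ) ^ ((1:ℝ)/2) + (normGradHL2 h ψ) ^ ((1:ℝ)/2)) := by
  refine ⟨2 * √(2 * h), by positivity, ?_⟩
  intro φ ϕ ψ hmφ hmϕ hmψ hdϕ hdψ hφ hϕ hψ hgϕ hgψ
  rw [IntegrableOn, restrict_Omg] at hφ hϕ hψ hgϕ hgψ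
  have hvol : (volume.restrict (Ioo (-h) h)).real univ = 2 * h := by
    simp [measureReal_def, Real.volume_Ioo, hh.le]; ring
  have hϕE := sqrt_integral_sqDensity_le hmϕ hϕ hgϕ
  have hψE := sqrt_integral_sqDensity_le hmψ hψ hgψ
  simp only [← Real.sqrt_eq_rpow]
  calc _ ≤ √(2 * h) * normL2 h φ
          * √(∫ q, sqDensity ϕ (normGradH ϕ) q ∂((volume.restrict Msq).prod _))
          * √(∫ q, sqDensity ψ (normGradH ψ) q ∂((volume.restrict Msq).prod _)) := by
        rw [← hvol, normL2_eq hφ]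
        exact integral_integral_abs_mul_integral_abs_mul_le hmφ hmϕ hmψ hdϕ hdψ hφ hϕ hψ hgϕ hgψ
    _ ≤ √(2 * h) * normL2 h φ * (√2 * (√(normL2 h ϕ) * (√(normL2 h ϕ) + √(normGradHL2 h ϕ))))
          * (√2 * (√(normL2 h ψ) * (√(normL2 h ψ) + √(normGradHL2 h ψ)))) := by
        have h0 : 0 ≤ √(2 * h) * normL2 h φ := mul_nonneg (Real.sqrt_nonneg _) (Real.sqrt_nonneg _)
        exact mul_le_mul (mul_le_mul_of_nonneg_left hϕE h0) hψE (Real.sqrt_nonneg _)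
          (mul_nonneg h0 (by positivity))
    _ = _ := by
        ring_nf
        rw [Real.sq_sqrt zero_le_two]
        ring
end
end

section
/- For any measurable functions φ, ϕ, ψ on Ω = M×(-h,h) such that the right-hand side is finite, one has ∫_M (∫_{-h}^h |φ| dz)(∫_{-h}^h |ϕ||ψ| dz) dxdy ≤ (∫_{-h}^h ‖φ(·,z)‖_{L⁴(M)} dz)(∫_{-h}^h ‖ϕ(·,z)‖_{L⁴(M)}² dz)^{1/2} ‖ψ‖_{L²(Ω)}. -/
open MeasureTheory Set

noncomputable section

/-- The `L⁴(M)` norm of a function on `M`. -/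
def normL4M (f : ℝ × ℝ → ℝ) : ℝ := (∫ xy in Msq, |f xy| ^ 4) ^ ((1:ℝ)/4)

/-!
Expand the left-hand side as `∫_M ∫∫ |φ(·,z')| |ϕ(·,z)| |ψ(·,z)| dz' dz` and integrate over `M`
first (Tonelli). For fixed `z'`, `z`, Hölder on `M` with exponents `(4, 4, 2)` bounds the inner
integral by `‖φ(·,z')‖₄ ‖ϕ(·,z)‖₄ ‖ψ(·,z)‖₂`; the `z'`-integral then splits off, and
Cauchy–Schwarz in `z` gives the remaining two factors. The argument runs in `ℝ≥0∞`, where no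
integrability is needed, and the real inequality is recovered through `ENNReal.ofReal`.
-/

open ENNReal Function

section Lp

variable {α : Type*} [MeasurableSpace α] {μ : Measure α}

lemma holderTriple_four_four_two : HolderTriple 4 4 2 :=
  .of_toReal ⟨by norm_num, by norm_num, by norm_num⟩

theorem lintegral_enorm_mul_mul_le_eLpNorm {f g k : α → ℝ} (hf : AEStronglyMeasurable f μ)
    (hg : AEStronglyMeasurable g μ) (hk : AEStronglyMeasurable k μ) :
    ∫⁻ x, ‖f x‖ₑ * ‖g x‖ₑ * ‖k x‖ₑ ∂μ ≤ eLpNorm f 4 μ * eLpNorm g 4 μ * eLpNorm k 2 μ := by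
  have := holderTriple_four_four_two
  calc ∫⁻ x, ‖f x‖ₑ * ‖g x‖ₑ * ‖k x‖ₑ ∂μ = eLpNorm ((f * g) • k) 1 μ := by
        simp [eLpNorm_one_eq_lintegral_enorm, enorm_mul]
    _ ≤ eLpNorm (f * g) 2 μ * eLpNorm k 2 μ := eLpNorm_smul_le_mul_eLpNorm hk (hf.mul hg)
    _ ≤ eLpNorm f 4 μ * eLpNorm g 4 μ * eLpNorm k 2 μ :=
        mul_le_mul_left (eLpNorm_smul_le_mul_eLpNorm hg hf) _

theorem lintegral_mul_le_L2_mul_L2 {f g : α → ℝ≥0∞} (hf : AEMeasurable f μ)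
    (hg : AEMeasurable g μ) :
    ∫⁻ x, f x * g x ∂μ ≤ (∫⁻ x, f x ^ 2 ∂μ) ^ (1 / 2 : ℝ) * (∫⁻ x, g x ^ 2 ∂μ) ^ (1 / 2 : ℝ) := by
  simp_rw [← ENNReal.rpow_two]
  exact ENNReal.lintegral_mul_le_Lp_mul_Lq μ Real.HolderConjugate.two_two hf hg

theorem eLpNorm_natCast_eq_ofReal_integral {f : α → ℝ} {p : ℕ} (hp : p ≠ 0)
    (hf : AEStronglyMeasurable f μ) (hfp : Integrable (fun x => |f x| ^ p) μ) :
    eLpNorm f p μ = ENNReal.ofReal ((∫ x, |f x| ^ p ∂μ) ^ (1 / p : ℝ)) := by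
  have hp' : (p : ℝ≥0∞) ≠ 0 := by exact_mod_cast hp
  have hmem : MemLp f p μ :=
    (integrable_norm_rpow_iff hf hp' (natCast_ne_top p)).mp (by simpa using hfp)
  simpa using hmem.eLpNorm_eq_integral_rpow_norm hp' (natCast_ne_top p)

theorem eLpNorm_two_sq_eq_lintegral (f : α → ℝ) : eLpNorm f 2 μ ^ 2 = ∫⁻ x, ‖f x‖ₑ ^ 2 ∂μ := by
  have := eLpNorm_nnreal_pow_eq_lintegral (μ := μ) (f := f) (p := 2) two_ne_zero
  simpa only [NNReal.coe_ofNat, ENNReal.coe_ofNat, ENNReal.rpow_two] using this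

end Lp

section MixedNorm

variable {α β : Type*} [MeasurableSpace α] [MeasurableSpace β] {μ : Measure α} {ν : Measure β}
  [SFinite μ] [SFinite ν]

theorem measurable_eLpNorm_section {F : α → β → ℝ} (hF : Measurable (uncurry F)) {p : ℝ≥0∞}
    (hp0 : p ≠ 0) (hp : p ≠ ∞) : Measurable fun z => eLpNorm (F · z) p μ := by
  simp_rw [eLpNorm_eq_lintegral_rpow_enorm_toReal hp0 hp]
  exact ((hF.enorm.pow_const _).lintegral_prod_left').pow_const _

theorem lintegral_mul_lintegral_le_mixed_eLpNorm {F G K : α → β → ℝ}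
    (hF : Measurable (uncurry F)) (hG : Measurable (uncurry G)) (hK : Measurable (uncurry K)) :
    ∫⁻ x, (∫⁻ z, ‖F x z‖ₑ ∂ν) * ∫⁻ z, ‖G x z‖ₑ * ‖K x z‖ₑ ∂ν ∂μ ≤
      (∫⁻ z, eLpNorm (F · z) 4 μ ∂ν) * (∫⁻ z, eLpNorm (G · z) 4 μ ^ 2 ∂ν) ^ (1 / 2 : ℝ) *
        eLpNorm (uncurry K) 2 (μ.prod ν) := by
  set a := fun z => eLpNorm (F · z) 4 μ
  set b := fun z => eLpNorm (G · z) 4 μ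
  set c := fun z => eLpNorm (K · z) 2 μ
  have ha : Measurable a := measurable_eLpNorm_section hF (by norm_num) (by norm_num)
  have hb : Measurable b := measurable_eLpNorm_section hG (by norm_num) (by norm_num)
  have hc : Measurable c := measurable_eLpNorm_section hK (by norm_num) (by norm_num)
  have hc2 : ∫⁻ z, c z ^ 2 ∂ν = eLpNorm (uncurry K) 2 (μ.prod ν) ^ 2 := by
    simp_rw [c, eLpNorm_two_sq_eq_lintegral,
      lintegral_prod_symm _ (hK.enorm.pow_const 2).aemeasurable]
    rfl
  calc ∫⁻ x, (∫⁻ z, ‖F x z‖ₑ ∂ν) * ∫⁻ z, ‖G x z‖ₑ * ‖K x z‖ₑ ∂ν ∂μ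
      = ∫⁻ x, ∫⁻ w, ‖F x w.1‖ₑ * (‖G x w.2‖ₑ * ‖K x w.2‖ₑ) ∂ν.prod ν ∂μ := by
        refine lintegral_congr fun x => (lintegral_prod_mul ?_ ?_).symm <;> fun_prop
    _ = ∫⁻ w, ∫⁻ x, ‖F x w.1‖ₑ * ‖G x w.2‖ₑ * ‖K x w.2‖ₑ ∂μ ∂ν.prod ν := by
        rw [lintegral_lintegral_swap]
        · simp_rw [mul_assoc]
        · have hF' : Measurable fun p : α × β × β => F p.1 p.2.1 :=
            hF.comp (measurable_fst.prodMk measurable_snd.fst)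
          have hG' : Measurable fun p : α × β × β => G p.1 p.2.2 :=
            hG.comp (measurable_fst.prodMk measurable_snd.snd)
          have hK' : Measurable fun p : α × β × β => K p.1 p.2.2 :=
            hK.comp (measurable_fst.prodMk measurable_snd.snd)
          exact (hF'.enorm.mul (hG'.enorm.mul hK'.enorm)).aemeasurable
    _ ≤ ∫⁻ w, a w.1 * (b w.2 * c w.2) ∂ν.prod ν := by
        refine lintegral_mono fun w => ?_
        rw [← mul_assoc]
        exact lintegral_enorm_mul_mul_le_eLpNorm
          (hF.comp measurable_prodMk_right).aestronglyMeasurable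
          (hG.comp measurable_prodMk_right).aestronglyMeasurable
          (hK.comp measurable_prodMk_right).aestronglyMeasurable
    _ = (∫⁻ z, a z ∂ν) * ∫⁻ z, b z * c z ∂ν :=
        lintegral_prod_mul ha.aemeasurable (hb.mul hc).aemeasurable
    _ ≤ (∫⁻ z, a z ∂ν) * ((∫⁻ z, b z ^ 2 ∂ν) ^ (1 / 2 : ℝ) * (∫⁻ z, c z ^ 2 ∂ν) ^ (1 / 2 : ℝ)) :=
        mul_le_mul_right (lintegral_mul_le_L2_mul_L2 hb.aemeasurable hc.aemeasurable) _
    _ = _ := by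
        rw [hc2, ← ENNReal.rpow_natCast, ← ENNReal.rpow_mul, mul_assoc]
        norm_num
        rfl

end MixedNorm

theorem ofReal_integral_mul_integral_le {α β : Type*} [MeasurableSpace α] [MeasurableSpace β]
    {μ : Measure α} {ν : Measure β} (u v : α → β → ℝ) :
    ENNReal.ofReal (∫ x, (∫ z, u x z ∂ν) * ∫ z, v x z ∂ν ∂μ) ≤
      ∫⁻ x, (∫⁻ z, ‖u x z‖ₑ ∂ν) * ∫⁻ z, ‖v x z‖ₑ ∂ν ∂μ :=
  calc ENNReal.ofReal (∫ x, (∫ z, u x z ∂ν) * ∫ z, v x z ∂ν ∂μ)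
      ≤ ∫⁻ x, ‖(∫ z, u x z ∂ν) * ∫ z, v x z ∂ν‖ₑ ∂μ :=
        (Real.ofReal_le_enorm _).trans (enorm_integral_le_lintegral_enorm _)
    _ ≤ ∫⁻ x, (∫⁻ z, ‖u x z‖ₑ ∂ν) * ∫⁻ z, ‖v x z‖ₑ ∂ν ∂μ := by
        refine lintegral_mono fun x => ?_
        rw [enorm_mul]
        exact mul_le_mul' (enorm_integral_le_lintegral_enorm _)
          (enorm_integral_le_lintegral_enorm _)

theorem normL4M_nonneg (f : ℝ × ℝ → ℝ) : 0 ≤ normL4M f :=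
  Real.rpow_nonneg (integral_nonneg fun _ => by positivity) _

theorem ofReal_normL4M {f : ℝ × ℝ → ℝ} (hf : AEStronglyMeasurable f (volume.restrict Msq))
    (hf4 : IntegrableOn (fun xy => |f xy| ^ 4) Msq) :
    ENNReal.ofReal (normL4M f) = eLpNorm f 4 (volume.restrict Msq) := by
  have := eLpNorm_natCast_eq_ofReal_integral (p := 4) (by norm_num) hf hf4
  norm_num at this
  rw [this, normL4M, one_div]

theorem volume_restrict_Msq_prod {h : ℝ} :
    (volume.restrict Msq).prod (volume.restrict (Ioo (-h) h)) = volume.restrict (Omg h) := by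
  rw [Measure.prod_restrict, ← Measure.volume_eq_prod]
  rfl

theorem ofReal_normL2 {h : ℝ} {ψ : ℝ × ℝ → ℝ → ℝ} (hψ : Measurable (uncurry ψ))
    (hψ2 : IntegrableOn (fun q : (ℝ × ℝ) × ℝ => ψ q.1 q.2 ^ 2) (Omg h)) :
    ENNReal.ofReal (normL2 h ψ) =
      eLpNorm (uncurry ψ) 2 ((volume.restrict Msq).prod (volume.restrict (Ioo (-h) h))) := by
  rw [IntegrableOn, ← volume_restrict_Msq_prod] at hψ2
  have := eLpNorm_natCast_eq_ofReal_integral (p := 2) two_ne_zero hψ.aestronglyMeasurable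
    (by simp only [sq_abs]; exact hψ2)
  simp only [sq_abs, Nat.cast_ofNat] at this
  rw [this, normL2, ← integral_prod _ hψ2, Real.sqrt_eq_rpow]
  rfl

section Sections

variable {β : Type*} [MeasurableSpace β] {ν : Measure β} {φ : ℝ × ℝ → β → ℝ}

theorem ofReal_normL4M_section_ae (hφ : Measurable (uncurry φ))
    (hφ4 : ∀ᵐ z ∂ν, IntegrableOn (fun xy => |φ xy z| ^ 4) Msq) :
    ∀ᵐ z ∂ν, ENNReal.ofReal (normL4M (φ · z)) = eLpNorm (φ · z) 4 (volume.restrict Msq) := by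
  filter_upwards [hφ4] with z hz
  exact ofReal_normL4M (hφ.comp measurable_prodMk_right).aestronglyMeasurable hz

theorem ofReal_integral_normL4M (hφ : Measurable (uncurry φ))
    (hφ4 : ∀ᵐ z ∂ν, IntegrableOn (fun xy => |φ xy z| ^ 4) Msq)
    (hφz : Integrable (fun z => normL4M (φ · z)) ν) :
    ENNReal.ofReal (∫ z, normL4M (φ · z) ∂ν) =
      ∫⁻ z, eLpNorm (φ · z) 4 (volume.restrict Msq) ∂ν := by
  rw [ofReal_integral_eq_lintegral_ofReal hφz (ae_of_all _ fun z => normL4M_nonneg _)]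
  exact lintegral_congr_ae (ofReal_normL4M_section_ae hφ hφ4)

theorem ofReal_sqrt_integral_normL4M_sq (hφ : Measurable (uncurry φ))
    (hφ4 : ∀ᵐ z ∂ν, IntegrableOn (fun xy => |φ xy z| ^ 4) Msq)
    (hφz : Integrable (fun z => normL4M (φ · z) ^ 2) ν) :
    ENNReal.ofReal ((∫ z, normL4M (φ · z) ^ 2 ∂ν) ^ (1 / 2 : ℝ)) =
      (∫⁻ z, eLpNorm (φ · z) 4 (volume.restrict Msq) ^ 2 ∂ν) ^ (1 / 2 : ℝ) := by
  rw [← ENNReal.ofReal_rpow_of_nonneg (integral_nonneg fun _ => sq_nonneg _) (by norm_num),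
    ofReal_integral_eq_lintegral_ofReal hφz (ae_of_all _ fun _ => sq_nonneg _)]
  congr 1
  refine lintegral_congr_ae ?_
  filter_upwards [ofReal_normL4M_section_ae hφ hφ4] with z hz
  rw [ENNReal.ofReal_pow (normL4M_nonneg _), hz]

end Sections

theorem statement1_general (h : ℝ) (φ ϕ ψ : (ℝ × ℝ) → ℝ → ℝ)
    (hφm : Measurable (fun q : (ℝ × ℝ) × ℝ => φ q.1 q.2))
    (hϕm : Measurable (fun q : (ℝ × ℝ) × ℝ => ϕ q.1 q.2))
    (hψm : Measurable (fun q : (ℝ × ℝ) × ℝ => ψ q.1 q.2))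
    (hφ4 : ∀ᵐ z ∂(volume.restrict (Set.Ioo (-h) h)),
      IntegrableOn (fun xy => |φ xy z| ^ 4) Msq)
    (hϕ4 : ∀ᵐ z ∂(volume.restrict (Set.Ioo (-h) h)),
      IntegrableOn (fun xy => |ϕ xy z| ^ 4) Msq)
    (hφz : IntegrableOn (fun z => normL4M (fun xy => φ xy z)) (Set.Ioo (-h) h))
    (hϕz : IntegrableOn (fun z => (normL4M (fun xy => ϕ xy z)) ^ 2) (Set.Ioo (-h) h))
    (hψ2 : IntegrableOn (fun q : (ℝ × ℝ) × ℝ => (ψ q.1 q.2) ^ 2) (Omg h)) :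
    (∫ xy in Msq,
        (∫ z in Set.Ioo (-h) h, |φ xy z|) * (∫ z in Set.Ioo (-h) h, |ϕ xy z| * |ψ xy z|))
      ≤ (∫ z in Set.Ioo (-h) h, normL4M (fun xy => φ xy z)) *
          ((∫ z in Set.Ioo (-h) h, (normL4M (fun xy => ϕ xy z)) ^ 2) ^ ((1:ℝ)/2)) *
          normL2 h ψ := by
  have hA : 0 ≤ ∫ z in Ioo (-h) h, normL4M (φ · z) :=
    integral_nonneg fun _ => normL4M_nonneg _
  have hB : 0 ≤ (∫ z in Ioo (-h) h, normL4M (ϕ · z) ^ 2) ^ (1 / 2 : ℝ) := by positivity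
  have hC : 0 ≤ normL2 h ψ := Real.sqrt_nonneg _
  rw [← ENNReal.ofReal_le_ofReal_iff (by positivity), ENNReal.ofReal_mul (by positivity),
    ENNReal.ofReal_mul hA, ofReal_integral_normL4M hφm hφ4 hφz,
    ofReal_sqrt_integral_normL4M_sq hϕm hϕ4 hϕz, ofReal_normL2 hψm hψ2]
  calc _ ≤ ∫⁻ xy in Msq, (∫⁻ z in Ioo (-h) h, ‖φ xy z‖ₑ) *
          ∫⁻ z in Ioo (-h) h, ‖ϕ xy z‖ₑ * ‖ψ xy z‖ₑ := by
        simpa only [enorm_mul, Real.enorm_abs] using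
          ofReal_integral_mul_integral_le (fun xy z => |φ xy z|) fun xy z => |ϕ xy z| * |ψ xy z|
    _ ≤ _ := lintegral_mul_lintegral_le_mixed_eLpNorm hφm hϕm hψm

/-- For any measurable functions `φ, ϕ, ψ` on `Ω = M × (-h,h)` such that the
right-hand side is finite, one has
`∫_M (∫_{-h}^h |φ| dz)(∫_{-h}^h |ϕ||ψ| dz) dxdy
  ≤ (∫_{-h}^h ‖φ(·,z)‖_{L⁴(M)} dz)(∫_{-h}^h ‖ϕ(·,z)‖_{L⁴(M)}² dz)^{1/2} ‖ψ‖_{L²(Ω)}`. -/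
theorem statement1 (h : ℝ) (hh : 0 < h) (φ ϕ ψ : (ℝ × ℝ) → ℝ → ℝ)
    (hφm : Measurable (fun q : (ℝ × ℝ) × ℝ => φ q.1 q.2))
    (hϕm : Measurable (fun q : (ℝ × ℝ) × ℝ => ϕ q.1 q.2))
    (hψm : Measurable (fun q : (ℝ × ℝ) × ℝ => ψ q.1 q.2))
    (hφ4 : ∀ᵐ z ∂(volume.restrict (Set.Ioo (-h) h)),
      IntegrableOn (fun xy => |φ xy z| ^ 4) Msq)
    (hϕ4 : ∀ᵐ z ∂(volume.restrict (Set.Ioo (-h) h)),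
      IntegrableOn (fun xy => |ϕ xy z| ^ 4) Msq)
    (hφz : IntegrableOn (fun z => normL4M (fun xy => φ xy z)) (Set.Ioo (-h) h))
    (hϕz : IntegrableOn (fun z => (normL4M (fun xy => ϕ xy z)) ^ 2) (Set.Ioo (-h) h))
    (hψ2 : IntegrableOn (fun q : (ℝ × ℝ) × ℝ => (ψ q.1 q.2) ^ 2) (Omg h)) :
    (∫ xy in Msq,
        (∫ z in Set.Ioo (-h) h, |φ xy z|) * (∫ z in Set.Ioo (-h) h, |ϕ xy z| * |ψ xy z|))
      ≤ (∫ z in Set.Ioo (-h) h, normL4M (fun xy => φ xy z)) *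
          ((∫ z in Set.Ioo (-h) h, (normL4M (fun xy => ϕ xy z)) ^ 2) ^ ((1:ℝ)/2)) *
          normL2 h ψ :=
  statement1_general h φ ϕ ψ hφm hϕm hψm hφ4 hϕ4 hφz hϕz hψ2
end
end

section
/- For any measurable functions φ, ϕ, ψ on Ω = M×(-h,h) such that the right-hand side is finite, one has ∫_M (∫_{-h}^h |φ||ϕ| dz)(∫_{-h}^h |ψ| dz) dxdy ≤ (∫_{-h}^h ‖φ(·,z)‖_{L⁴(M)}² dz)^{1/2} (∫_{-h}^h ‖ϕ(·,z)‖_{L⁴(M)}² dz)^{1/2} (∫_{-h}^h ‖ψ(·,z)‖_{L²(M)} dz). -/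
open MeasureTheory Set

noncomputable section

/-- The `L²(M)` norm of a function on `M`. -/
def normL2M (f : ℝ × ℝ → ℝ) : ℝ := Real.sqrt (∫ xy in Msq, (f xy) ^ 2)

/-!
Everything is passed to `ℝ≥0∞`-valued lower integrals of `‖φ‖ₑ, ‖ϕ‖ₑ, ‖ψ‖ₑ`, where Tonelli
applies without integrability side conditions. Writing the product of the two vertical integrals
as a double integral over heights `z, z'` and exchanging the order of integration, the integrand
at fixed `(z, z')` is `∫_M |φ(·,z)| |ϕ(·,z)| |ψ(·,z')|`, which Hölder with exponents `4, 4, 2`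
bounds by `‖φ(·,z)‖₄ ‖ϕ(·,z)‖₄ ‖ψ(·,z')‖₂`. The double integral then factors, and
Cauchy–Schwarz in `z` splits `∫ ‖φ(·,z)‖₄ ‖ϕ(·,z)‖₄ dz`.
-/

open Function
open scoped ENNReal

section MixedNorm

variable {α β : Type*} [MeasurableSpace α] [MeasurableSpace β] {μ : Measure α} {ν : Measure β}

theorem ENNReal.lintegral_mul_mul_le_L4_L4_L2 {f g k : α → ℝ≥0∞}
    (hf : AEMeasurable f μ) (hg : AEMeasurable g μ) (hk : AEMeasurable k μ) :
    ∫⁻ x, f x * g x * k x ∂μ ≤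
      (∫⁻ x, f x ^ (4:ℝ) ∂μ) ^ (1/4:ℝ) * (∫⁻ x, g x ^ (4:ℝ) ∂μ) ^ (1/4:ℝ) *
        (∫⁻ x, k x ^ (2:ℝ) ∂μ) ^ (1/2:ℝ) :=
  calc ∫⁻ x, f x * g x * k x ∂μ
      ≤ (∫⁻ x, (f * g) x ^ (2:ℝ) ∂μ) ^ (1/2:ℝ) * (∫⁻ x, k x ^ (2:ℝ) ∂μ) ^ (1/2:ℝ) :=
        ENNReal.lintegral_mul_le_Lp_mul_Lq μ .two_two (hf.mul hg) hk
    _ ≤ _ := by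
        gcongr
        exact ENNReal.lintegral_Lp_mul_le_Lq_mul_Lr (by norm_num) (by norm_num) (by norm_num) μ
          hf hg

theorem lintegral_mul_lintegral_eq_lintegral_lintegral_lintegral [SFinite μ] [SFinite ν]
    {a b : α → β → ℝ≥0∞} (ha : Measurable (uncurry a)) (hb : Measurable (uncurry b)) :
    ∫⁻ x, (∫⁻ z, a x z ∂ν) * (∫⁻ z, b x z ∂ν) ∂μ =
      ∫⁻ z, ∫⁻ z', ∫⁻ x, a x z * b x z' ∂μ ∂ν ∂ν := by
  have hab : Measurable fun p : (α × β) × β => a p.1.1 p.1.2 * b p.1.1 p.2 :=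
    (ha.comp measurable_fst).mul (hb.comp (measurable_fst.fst.prodMk measurable_snd))
  calc ∫⁻ x, (∫⁻ z, a x z ∂ν) * (∫⁻ z, b x z ∂ν) ∂μ
      = ∫⁻ x, ∫⁻ z, ∫⁻ z', a x z * b x z' ∂ν ∂ν ∂μ :=
        lintegral_congr fun x => (lintegral_lintegral_mul
          (ha.comp measurable_prodMk_left).aemeasurable
          (hb.comp measurable_prodMk_left).aemeasurable).symm
    _ = ∫⁻ z, ∫⁻ x, ∫⁻ z', a x z * b x z' ∂ν ∂μ ∂ν :=
        lintegral_lintegral_swap (Measurable.lintegral_prod_right' hab).aemeasurable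
    _ = ∫⁻ z, ∫⁻ z', ∫⁻ x, a x z * b x z' ∂μ ∂ν ∂ν :=
        lintegral_congr fun z => lintegral_lintegral_swap
          (hab.comp (measurable_fst.prodMk measurable_const |>.prodMk measurable_snd)).aemeasurable

theorem lintegral_mul_lintegral_le_mixed_norms [SFinite μ] [SFinite ν] {f g k : α → β → ℝ≥0∞}
    (hf : Measurable (uncurry f)) (hg : Measurable (uncurry g)) (hk : Measurable (uncurry k)) :
    ∫⁻ x, (∫⁻ z, f x z * g x z ∂ν) * (∫⁻ z, k x z ∂ν) ∂μ ≤
      (∫⁻ z, (∫⁻ x, f x z ^ (4:ℝ) ∂μ) ^ (1/2:ℝ) ∂ν) ^ (1/2:ℝ) *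
        (∫⁻ z, (∫⁻ x, g x z ^ (4:ℝ) ∂μ) ^ (1/2:ℝ) ∂ν) ^ (1/2:ℝ) *
        ∫⁻ z, (∫⁻ x, k x z ^ (2:ℝ) ∂μ) ^ (1/2:ℝ) ∂ν := by
  have slice_norm_measurable {a : α → β → ℝ≥0∞} (ha : Measurable (uncurry a)) (p q : ℝ) :
      Measurable fun z => (∫⁻ x, a x z ^ p ∂μ) ^ q :=
    ((ha.pow_const p).comp measurable_swap).lintegral_prod_right'.pow_const q
  set F := fun z => (∫⁻ x, f x z ^ (4:ℝ) ∂μ) ^ (1/4:ℝ)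
  set G := fun z => (∫⁻ x, g x z ^ (4:ℝ) ∂μ) ^ (1/4:ℝ)
  set K := fun z => (∫⁻ x, k x z ^ (2:ℝ) ∂μ) ^ (1/2:ℝ)
  have hF : Measurable F := slice_norm_measurable hf _ _
  have hG : Measurable G := slice_norm_measurable hg _ _
  calc ∫⁻ x, (∫⁻ z, f x z * g x z ∂ν) * (∫⁻ z, k x z ∂ν) ∂μ
      = ∫⁻ z, ∫⁻ z', ∫⁻ x, f x z * g x z * k x z' ∂μ ∂ν ∂ν :=
        lintegral_mul_lintegral_eq_lintegral_lintegral_lintegral (hf.mul hg) hk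
    _ ≤ ∫⁻ z, ∫⁻ z', F z * G z * K z' ∂ν ∂ν := by
        gcongr with z z'
        exact ENNReal.lintegral_mul_mul_le_L4_L4_L2
          (hf.comp measurable_prodMk_right).aemeasurable
          (hg.comp measurable_prodMk_right).aemeasurable
          (hk.comp measurable_prodMk_right).aemeasurable
    _ = (∫⁻ z, F z * G z ∂ν) * ∫⁻ z, K z ∂ν :=
        lintegral_lintegral_mul (hF.mul hG).aemeasurable (slice_norm_measurable hk _ _).aemeasurable
    _ ≤ (∫⁻ z, F z ^ (2:ℝ) ∂ν) ^ (1/2:ℝ) * (∫⁻ z, G z ^ (2:ℝ) ∂ν) ^ (1/2:ℝ) * ∫⁻ z, K z ∂ν := by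
        gcongr
        exact ENNReal.lintegral_mul_le_Lp_mul_Lq ν .two_two hF.aemeasurable hG.aemeasurable
    _ = _ := by
        simp only [F, G, K, ← ENNReal.rpow_mul]
        norm_num

theorem enorm_integral_mul_integral_le (a b : α → β → ℝ) :
    ‖∫ x, (∫ z, a x z ∂ν) * (∫ z, b x z ∂ν) ∂μ‖ₑ ≤
      ∫⁻ x, (∫⁻ z, ‖a x z‖ₑ ∂ν) * (∫⁻ z, ‖b x z‖ₑ ∂ν) ∂μ :=
  (enorm_integral_le_lintegral_enorm _).trans <| lintegral_mono fun x => by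
    rw [enorm_mul]
    gcongr <;> exact enorm_integral_le_lintegral_enorm _

theorem lintegral_eq_ofReal_integral {F : β → ℝ≥0∞} {G : β → ℝ} (hG : Integrable G ν)
    (hG0 : 0 ≤ G) (hFG : ∀ᵐ z ∂ν, ENNReal.ofReal (G z) = F z) :
    ∫⁻ z, F z ∂ν = ENNReal.ofReal (∫ z, G z ∂ν) := by
  rw [ofReal_integral_eq_lintegral_ofReal hG (.of_forall hG0)]
  exact lintegral_congr_ae (hFG.mono fun _ h => h.symm)

end MixedNorm

theorem lintegral_enorm_pow_eq_ofReal_integral {α : Type*} [MeasurableSpace α] {μ : Measure α}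
    {f : α → ℝ} {n : ℕ} (hf : Integrable (fun x => |f x| ^ n) μ) :
    ∫⁻ x, ‖f x‖ₑ ^ (n:ℝ) ∂μ = ENNReal.ofReal (∫ x, |f x| ^ n ∂μ) := by
  rw [ofReal_integral_eq_lintegral_ofReal hf (.of_forall fun x => by positivity)]
  refine lintegral_congr fun x => ?_
  rw [Real.enorm_eq_ofReal_abs, ENNReal.ofReal_rpow_of_nonneg (abs_nonneg _) n.cast_nonneg,
    Real.rpow_natCast]

theorem ofReal_normL4M_sq {f : ℝ × ℝ → ℝ} (hf : IntegrableOn (fun xy => |f xy| ^ 4) Msq) :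
    ENNReal.ofReal (normL4M f ^ 2) = (∫⁻ xy in Msq, ‖f xy‖ₑ ^ (4:ℝ)) ^ (1/2:ℝ) := by
  have hI : 0 ≤ ∫ xy in Msq, |f xy| ^ 4 := by positivity
  have hlint := lintegral_enorm_pow_eq_ofReal_integral hf
  rw [Nat.cast_ofNat] at hlint
  rw [hlint, ENNReal.ofReal_rpow_of_nonneg hI (by norm_num), normL4M, ← Real.rpow_natCast,
    ← Real.rpow_mul hI]
  norm_num

theorem ofReal_normL2M {f : ℝ × ℝ → ℝ} (hf : IntegrableOn (fun xy => f xy ^ 2) Msq) :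
    ENNReal.ofReal (normL2M f) = (∫⁻ xy in Msq, ‖f xy‖ₑ ^ (2:ℝ)) ^ (1/2:ℝ) := by
  simp_rw [← sq_abs (f _)] at hf
  have hlint := lintegral_enorm_pow_eq_ofReal_integral hf
  rw [Nat.cast_ofNat] at hlint
  rw [hlint, ENNReal.ofReal_rpow_of_nonneg (by positivity) (by norm_num), normL2M,
    Real.sqrt_eq_rpow]
  simp only [sq_abs]

theorem statement2_general (h : ℝ) (φ ϕ ψ : (ℝ × ℝ) → ℝ → ℝ)
    (hφm : Measurable (fun q : (ℝ × ℝ) × ℝ => φ q.1 q.2))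
    (hϕm : Measurable (fun q : (ℝ × ℝ) × ℝ => ϕ q.1 q.2))
    (hψm : Measurable (fun q : (ℝ × ℝ) × ℝ => ψ q.1 q.2))
    (hφ4 : ∀ᵐ z ∂(volume.restrict (Set.Ioo (-h) h)),
      IntegrableOn (fun xy => |φ xy z| ^ 4) Msq)
    (hϕ4 : ∀ᵐ z ∂(volume.restrict (Set.Ioo (-h) h)),
      IntegrableOn (fun xy => |ϕ xy z| ^ 4) Msq)
    (hψ2 : ∀ᵐ z ∂(volume.restrict (Set.Ioo (-h) h)),
      IntegrableOn (fun xy => (ψ xy z) ^ 2) Msq)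
    (hφz : IntegrableOn (fun z => (normL4M (fun xy => φ xy z)) ^ 2) (Set.Ioo (-h) h))
    (hϕz : IntegrableOn (fun z => (normL4M (fun xy => ϕ xy z)) ^ 2) (Set.Ioo (-h) h))
    (hψz : IntegrableOn (fun z => normL2M (fun xy => ψ xy z)) (Set.Ioo (-h) h)) :
    (∫ xy in Msq,
        (∫ z in Set.Ioo (-h) h, |φ xy z| * |ϕ xy z|) * (∫ z in Set.Ioo (-h) h, |ψ xy z|))
      ≤ ((∫ z in Set.Ioo (-h) h, (normL4M (fun xy => φ xy z)) ^ 2) ^ ((1:ℝ)/2)) *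
          ((∫ z in Set.Ioo (-h) h, (normL4M (fun xy => ϕ xy z)) ^ 2) ^ ((1:ℝ)/2)) *
          (∫ z in Set.Ioo (-h) h, normL2M (fun xy => ψ xy z)) := by
  have key := lintegral_mul_lintegral_le_mixed_norms (μ := volume.restrict Msq)
    (ν := volume.restrict (Ioo (-h) h)) (f := fun xy z => ‖φ xy z‖ₑ)
    (g := fun xy z => ‖ϕ xy z‖ₑ) (k := fun xy z => ‖ψ xy z‖ₑ) hφm.enorm hϕm.enorm hψm.enorm
  rw [lintegral_eq_ofReal_integral hφz (fun _ => sq_nonneg _) (hφ4.mono fun _ => ofReal_normL4M_sq),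
    lintegral_eq_ofReal_integral hϕz (fun _ => sq_nonneg _) (hϕ4.mono fun _ => ofReal_normL4M_sq),
    lintegral_eq_ofReal_integral hψz (fun _ => Real.sqrt_nonneg _)
      (hψ2.mono fun _ => ofReal_normL2M)] at key
  have hψ0 : 0 ≤ ∫ z in Ioo (-h) h, normL2M (fun xy => ψ xy z) :=
    integral_nonneg fun _ => Real.sqrt_nonneg _
  refine (le_abs_self _).trans ?_
  rw [← ENNReal.ofReal_le_ofReal_iff (by positivity), ← Real.enorm_eq_ofReal_abs,
    ENNReal.ofReal_mul (by positivity), ENNReal.ofReal_mul (by positivity),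
    ← ENNReal.ofReal_rpow_of_nonneg (by positivity) (by norm_num),
    ← ENNReal.ofReal_rpow_of_nonneg (by positivity) (by norm_num)]
  refine (enorm_integral_mul_integral_le _ _).trans ?_
  simpa only [enorm_mul, Real.enorm_abs] using key

/-- For any measurable functions `φ, ϕ, ψ` on `Ω = M × (-h,h)` such that the
right-hand side is finite, one has
`∫_M (∫_{-h}^h |φ||ϕ| dz)(∫_{-h}^h |ψ| dz) dxdy
  ≤ (∫_{-h}^h ‖φ(·,z)‖_{L⁴(M)}² dz)^{1/2} (∫_{-h}^h ‖ϕ(·,z)‖_{L⁴(M)}² dz)^{1/2}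
    (∫_{-h}^h ‖ψ(·,z)‖_{L²(M)} dz)`. -/
theorem statement2 (h : ℝ) (hh : 0 < h) (φ ϕ ψ : (ℝ × ℝ) → ℝ → ℝ)
    (hφm : Measurable (fun q : (ℝ × ℝ) × ℝ => φ q.1 q.2))
    (hϕm : Measurable (fun q : (ℝ × ℝ) × ℝ => ϕ q.1 q.2))
    (hψm : Measurable (fun q : (ℝ × ℝ) × ℝ => ψ q.1 q.2))
    (hφ4 : ∀ᵐ z ∂(volume.restrict (Set.Ioo (-h) h)),
      IntegrableOn (fun xy => |φ xy z| ^ 4) Msq)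
    (hϕ4 : ∀ᵐ z ∂(volume.restrict (Set.Ioo (-h) h)),
      IntegrableOn (fun xy => |ϕ xy z| ^ 4) Msq)
    (hψ2 : ∀ᵐ z ∂(volume.restrict (Set.Ioo (-h) h)),
      IntegrableOn (fun xy => (ψ xy z) ^ 2) Msq)
    (hφz : IntegrableOn (fun z => (normL4M (fun xy => φ xy z)) ^ 2) (Set.Ioo (-h) h))
    (hϕz : IntegrableOn (fun z => (normL4M (fun xy => ϕ xy z)) ^ 2) (Set.Ioo (-h) h))
    (hψz : IntegrableOn (fun z => normL2M (fun xy => ψ xy z)) (Set.Ioo (-h) h)) :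
    (∫ xy in Msq,
        (∫ z in Set.Ioo (-h) h, |φ xy z| * |ϕ xy z|) * (∫ z in Set.Ioo (-h) h, |ψ xy z|))
      ≤ ((∫ z in Set.Ioo (-h) h, (normL4M (fun xy => φ xy z)) ^ 2) ^ ((1:ℝ)/2)) *
          ((∫ z in Set.Ioo (-h) h, (normL4M (fun xy => ϕ xy z)) ^ 2) ^ ((1:ℝ)/2)) *
          (∫ z in Set.Ioo (-h) h, normL2M (fun xy => ψ xy z)) :=
  statement2_general h φ ϕ ψ hφm hϕm hψm hφ4 hϕ4 hψ2 hφz hϕz hψz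
end
end

section
/- Let 0 < T < ∞, and let A, B be nonnegative measurable functions on (0,T), with A absolutely continuous on (0,T) and continuous on [0,T), satisfying A'(t) + B(t) ≤ n(t) A(t) log(A(t)+B(t)+e) a.e. on (0,T), where n is a nonnegative function in L¹((0,T)). If in addition there exist positive constants K and α such that n(t) ≤ K(A(t)+1)^α for all t ∈ (0,T), then sup_{0≤t<T} A(t) < ∞ and ∫₀^T B(s) ds < ∞, with a bound depending only on A(0), K, α, T, and ∫₀^T n(s) ds. -/
/-!
Put `m = n A`. The growth bound `n ≤ K (A + 1) ^ α` gives `log (2m + e) ≤ (C - 1) log (A + e)`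
with `C = log (2K + e) + α + 2`, and `m log (B + e) ≤ B / 2 + m log (2m + e)` absorbs the
`B`-dependence of the logarithm, so that `A' + B / 2 ≤ C n (A + e) log (A + e)` a.e.
Hence `log (log (A + e))` is absolutely continuous with derivative at most `C n`, which bounds
`A + e` by `M = (A 0 + e) ^ exp (C ∫ n)`; integrating `B / 2 ≤ C M log M n - A'` then bounds
`∫ B` by `2 (C M log M ∫ n + A 0)`.
-/

open MeasureTheory Set Filter Real

theorem log_add_add_exp_le {a b : ℝ} (ha : 0 ≤ a) (hb : 0 ≤ b) :
    log (a + b + exp 1) ≤ log (a + exp 1) + log (b + exp 1) := by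
  have he : 1 ≤ exp 1 := one_le_exp zero_le_one
  rw [← log_mul (by positivity) (by positivity)]
  exact log_le_log (by positivity) (by nlinarith)

theorem mul_log_add_exp_le {m b : ℝ} (hm : 0 ≤ m) (hb : 0 ≤ b) :
    m * log (b + exp 1) ≤ b / 2 + m * log (2 * m + exp 1) := by
  have he : 0 < exp 1 := exp_pos 1
  rcases le_or_gt b (2 * m) with hbm | hbm
  · have : log (b + exp 1) ≤ log (2 * m + exp 1) := log_le_log (by positivity) (by linarith)
    nlinarith
  · have hlog : log (b + exp 1) - log (2 * m + exp 1) ≤ (b - 2 * m) / (2 * m + exp 1) := by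
      rw [← log_div (by positivity) (by positivity)]
      refine (log_le_sub_one_of_pos (by positivity)).trans_eq ?_
      field_simp
      ring
    have hfrac : m * ((b - 2 * m) / (2 * m + exp 1)) ≤ b / 2 := by
      rw [mul_div_assoc', div_le_div_iff₀ (by positivity) two_pos]
      nlinarith
    nlinarith [mul_le_mul_of_nonneg_left hlog hm]

theorem log_two_mul_add_exp_le {K α a m : ℝ} (hK : 0 ≤ K) (hα : 0 ≤ α) (ha : 0 ≤ a)
    (hm₀ : 0 ≤ m) (hm : m ≤ K * (a + 1) ^ (α + 1)) :
    log (2 * m + exp 1) ≤ (log (2 * K + exp 1) + α + 1) * log (a + exp 1) := by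
  have he : 1 ≤ exp 1 := one_le_exp zero_le_one
  have hpow : 1 ≤ (a + 1) ^ (α + 1) := one_le_rpow (by linarith) (by linarith)
  have hlogK : 0 ≤ log (2 * K + exp 1) := log_nonneg (by linarith)
  have hloga : log (a + 1) ≤ log (a + exp 1) := log_le_log (by linarith) (by linarith)
  have hloga₁ : 1 ≤ log (a + exp 1) := by
    simpa using log_le_log (exp_pos 1) (le_add_of_nonneg_left ha)
  calc log (2 * m + exp 1) ≤ log ((2 * K + exp 1) * (a + 1) ^ (α + 1)) :=
        log_le_log (by positivity) (by nlinarith)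
    _ = log (2 * K + exp 1) + (α + 1) * log (a + 1) := by
        rw [log_mul (by positivity) (by positivity), log_rpow (by linarith)]
    _ ≤ (log (2 * K + exp 1) + α + 1) * log (a + exp 1) := by nlinarith

theorem add_half_le_of_le_mul_log {K α ν a b d : ℝ} (hK : 0 ≤ K) (hα : 0 ≤ α) (ha : 0 ≤ a)
    (hb : 0 ≤ b) (hν : 0 ≤ ν) (hνK : ν ≤ K * (a + 1) ^ α)
    (hd : d + b ≤ ν * a * log (a + b + exp 1)) :
    d + b / 2 ≤ (log (2 * K + exp 1) + α + 2) * ν * ((a + exp 1) * log (a + exp 1)) := by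
  set m := ν * a
  have hm₀ : 0 ≤ m := mul_nonneg hν ha
  have hm : m ≤ K * (a + 1) ^ (α + 1) := by
    rw [rpow_add_one (by linarith), ← mul_assoc]
    exact mul_le_mul hνK (by linarith) ha (by positivity)
  have hloga : 0 ≤ log (a + exp 1) := log_nonneg (by linarith [one_le_exp zero_le_one])
  have h₁ := mul_le_mul_of_nonneg_left (log_add_add_exp_le ha hb) hm₀
  have h₂ := mul_log_add_exp_le hm₀ hb
  have h₃ := mul_le_mul_of_nonneg_left (log_two_mul_add_exp_le hK hα ha hm₀ hm) hm₀
  have h₄ : m * log (a + exp 1) ≤ ν * ((a + exp 1) * log (a + exp 1)) := by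
    rw [← mul_assoc]
    exact mul_le_mul_of_nonneg_right
      (mul_le_mul_of_nonneg_left (by linarith [exp_pos 1]) hν) hloga
  have hC : 0 ≤ log (2 * K + exp 1) + α + 2 := by
    linarith [log_nonneg (show 1 ≤ 2 * K + exp 1 by linarith [one_le_exp zero_le_one])]
  calc d + b / 2 ≤ (log (2 * K + exp 1) + α + 2) * (m * log (a + exp 1)) := by nlinarith
    _ ≤ (log (2 * K + exp 1) + α + 2) * (ν * ((a + exp 1) * log (a + exp 1))) := by gcongr
    _ = _ := by ring

theorem add_exp_mul_log_le {x M : ℝ} (hx : 0 ≤ x) (hxM : x + exp 1 ≤ M) :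
    (x + exp 1) * log (x + exp 1) ≤ M * log M := by
  have hx₁ : 1 ≤ x + exp 1 := by linarith [add_one_le_exp 1]
  exact mul_le_mul hxM (log_le_log (by linarith) hxM) (log_nonneg hx₁) (by linarith)

theorem AbsolutelyContinuousOnInterval.of_dist_le_mul {X Y : Type*} [PseudoMetricSpace X]
    [PseudoMetricSpace Y] {f : ℝ → X} {g : ℝ → Y} {a b K : ℝ}
    (hf : AbsolutelyContinuousOnInterval f a b)
    (hgf : ∀ x ∈ uIcc a b, ∀ y ∈ uIcc a b, dist (g x) (g y) ≤ K * dist (f x) (f y)) :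
    AbsolutelyContinuousOnInterval g a b := by
  unfold AbsolutelyContinuousOnInterval at hf ⊢
  refine squeeze_zero' (Eventually.of_forall fun _ ↦ Finset.sum_nonneg fun _ _ ↦ dist_nonneg)
    ?_ (by simpa using hf.const_mul K)
  rw [eventually_inf_principal]
  filter_upwards with E hE
  rw [Finset.mul_sum]
  gcongr with i hi
  exact hgf _ (hE.1 i hi).1 _ (hE.1 i hi).2

theorem absolutelyContinuousOnInterval_of_eq_add_integral {f f' : ℝ → ℝ} {a b : ℝ}
    (hf' : IntervalIntegrable f' volume a b)
    (hf : ∀ x ∈ uIcc a b, f x = f a + ∫ s in a..x, f' s) :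
    AbsolutelyContinuousOnInterval f a b :=
  (hf'.absolutelyContinuousOnInterval_intervalIntegral left_mem_uIcc).of_dist_le_mul (K := 1)
    fun x hx y hy ↦ by rw [hf x hx, hf y hy, dist_add_left, one_mul]

theorem hasDerivAt_log_log_add_exp {y : ℝ} (hy : 0 ≤ y) :
    HasDerivAt (fun y ↦ log (log (y + exp 1))) ((y + exp 1)⁻¹ / log (y + exp 1)) y := by
  have h1 : 1 < y + exp 1 := by linarith [add_one_lt_exp one_ne_zero]
  exact (((hasDerivAt_id' y).add_const _).log (by linarith)).log (log_pos h1).ne' |>.congr_deriv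
    (by simp)

theorem lipschitzOnWith_log_log_add_exp :
    LipschitzOnWith 1 (fun y ↦ log (log (y + exp 1))) (Ici 0) := by
  refine Convex.lipschitzOnWith_of_nnnorm_hasDerivWithin_le (convex_Ici 0)
    (fun y hy ↦ (hasDerivAt_log_log_add_exp hy).hasDerivWithinAt) fun y hy ↦ ?_
  have he : 1 ≤ y + exp 1 := by linarith [add_one_le_exp 1, mem_Ici.mp hy]
  have hl : 1 ≤ log (y + exp 1) := by
    simpa using log_le_log (exp_pos 1) (le_add_of_nonneg_left (mem_Ici.mp hy))
  rw [← NNReal.coe_le_coe, coe_nnnorm, Real.norm_eq_abs, NNReal.coe_one,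
    abs_of_nonneg (by positivity)]
  calc (y + exp 1)⁻¹ / log (y + exp 1) ≤ 1 / 1 := by gcongr; exact inv_le_one_of_one_le₀ he
    _ = 1 := by norm_num

theorem log_log_add_exp_le_of_ae_deriv_le {f f' g : ℝ → ℝ} {a b : ℝ} (hab : a ≤ b)
    (hf : AbsolutelyContinuousOnInterval f a b) (hf₀ : ∀ x ∈ Icc a b, 0 ≤ f x)
    (hg : IntervalIntegrable g volume a b)
    (hf' : ∀ᵐ x ∂volume.restrict (Ioo a b),
      HasDerivAt f (f' x) x ∧ f' x ≤ g x * ((f x + exp 1) * log (f x + exp 1))) :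
    log (log (f b + exp 1)) ≤ log (log (f a + exp 1)) + ∫ x in a..b, g x := by
  set G : ℝ → ℝ := fun y ↦ log (log (y + exp 1))
  have hGf : AbsolutelyContinuousOnInterval (G ∘ f) a b := by
    refine hf.of_dist_le_mul (K := 1) fun x hx y hy ↦ ?_
    rw [uIcc_of_le hab] at hx hy
    simpa using lipschitzOnWith_log_log_add_exp.dist_le_mul _ (hf₀ x hx) _ (hf₀ y hy)
  have hderiv : ∀ᵐ x ∂volume.restrict (Icc a b), deriv (G ∘ f) x ≤ g x := by
    rw [← Measure.restrict_congr_set Ioo_ae_eq_Icc]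
    filter_upwards [hf', ae_restrict_mem measurableSet_Ioo] with x ⟨hfx, hle⟩ hx
    have hx₀ := hf₀ x (Ioo_subset_Icc_self hx)
    have hpos : 0 < (f x + exp 1) * log (f x + exp 1) := by
      have : 1 < f x + exp 1 := by linarith [add_one_lt_exp one_ne_zero]
      exact mul_pos (by linarith) (log_pos this)
    rw [((hasDerivAt_log_log_add_exp hx₀).comp x hfx).deriv, div_mul_eq_mul_div,
      inv_mul_eq_div, div_div, div_le_iff₀ hpos]
    exact hle
  have := intervalIntegral.integral_mono_ae_restrict hab hGf.intervalIntegrable_deriv hg hderiv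
  rw [hGf.integral_deriv_eq_sub] at this
  simp only [Function.comp_apply, G] at this
  linarith

theorem add_exp_le_rpow_of_ae_deriv_le {f f' g : ℝ → ℝ} {a b : ℝ} (hab : a ≤ b)
    (hf : AbsolutelyContinuousOnInterval f a b) (hf₀ : ∀ x ∈ Icc a b, 0 ≤ f x)
    (hg : IntervalIntegrable g volume a b)
    (hf' : ∀ᵐ x ∂volume.restrict (Ioo a b),
      HasDerivAt f (f' x) x ∧ f' x ≤ g x * ((f x + exp 1) * log (f x + exp 1))) :
    f b + exp 1 ≤ (f a + exp 1) ^ exp (∫ x in a..b, g x) := by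
  have key := log_log_add_exp_le_of_ae_deriv_le hab hf hf₀ hg hf'
  have one_lt {x : ℝ} (hx : x ∈ Icc a b) : 1 < f x + exp 1 := by
    linarith [add_one_lt_exp one_ne_zero, hf₀ x hx]
  have hb := one_lt (right_mem_Icc.2 hab)
  have ha := one_lt (left_mem_Icc.2 hab)
  rw [← log_le_log_iff (by linarith) (by positivity), log_rpow (by linarith),
    ← log_le_log_iff (log_pos hb) (mul_pos (exp_pos _) (log_pos ha)), log_mul (exp_pos _).ne'
    (log_pos ha).ne', log_exp]
  linarith

theorem mapsTo_Ico_of_mapsTo_Ioo {X : Type*} [TopologicalSpace X] {f : ℝ → X} {a b : ℝ}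
    {s : Set X} (hab : a < b) (hf : ContinuousOn f (Ico a b)) (hs : IsClosed s)
    (h : MapsTo f (Ioo a b) s) : MapsTo f (Ico a b) s := fun x hx ↦
  hs.closure_subset (((hf x hx).mono Ioo_subset_Ico_self).mem_closure
    (by rw [closure_Ioo hab.ne]; exact Ico_subset_Icc_self hx) h)

theorem intervalIntegral_le_setIntegral_Ioo {f : ℝ → ℝ} {a b t : ℝ}
    (hf : IntegrableOn f (Ioo a b)) (hf₀ : ∀ x ∈ Ioo a b, 0 ≤ f x) (ht : t ∈ Ico a b) :
    ∫ x in a..t, f x ≤ ∫ x in Ioo a b, f x := by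
  rw [intervalIntegral.integral_of_le ht.1]
  exact setIntegral_mono_set hf ((ae_restrict_iff' measurableSet_Ioo).2 (ae_of_all _ hf₀))
    (Ioc_subset_Ioo_right ht.2).eventuallyLE

theorem setIntegral_Ioo_le_of_intervalIntegral_le {f : ℝ → ℝ} {a b c : ℝ} (hab : a < b)
    (hf : IntegrableOn f (Ioo a b)) (h : ∀ t ∈ Ioo a b, ∫ x in a..t, f x ≤ c) :
    ∫ x in Ioo a b, f x ≤ c := by
  have hcont := intervalIntegral.continuousOn_primitive_interval (a := a) (b := b)
    (hf.congr_set_ae (by rw [uIcc_of_le hab.le]; exact Ioo_ae_eq_Icc.symm))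
  rw [← integral_Ioc_eq_integral_Ioo, ← intervalIntegral.integral_of_le hab.le]
  refine ContinuousWithinAt.closure_le (by rw [closure_Ioo hab.ne]; exact right_mem_Icc.2 hab.le)
    ((hcont b right_mem_uIcc).mono ?_) continuousWithinAt_const h
  rw [uIcc_of_le hab.le]
  exact Ioo_subset_Icc_self

theorem add_exp_le_rpow_on_Ico_of_ae_deriv_le {f f' g : ℝ → ℝ} {a b : ℝ} (hab : a < b)
    (hfc : ContinuousOn f (Ico a b)) (hf₀ : ∀ x ∈ Ioo a b, 0 ≤ f x)
    (hf'i : ∀ t ∈ Ioo a b, IntervalIntegrable f' volume a t)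
    (hf : ∀ t ∈ Ico a b, f t = f a + ∫ s in a..t, f' s)
    (hg : IntegrableOn g (Ioo a b)) (hg₀ : ∀ x ∈ Ioo a b, 0 ≤ g x)
    (hf' : ∀ᵐ x ∂volume.restrict (Ioo a b),
      HasDerivAt f (f' x) x ∧ f' x ≤ g x * ((f x + exp 1) * log (f x + exp 1))) :
    ∀ t ∈ Ico a b, f t + exp 1 ≤ (f a + exp 1) ^ exp (∫ x in Ioo a b, g x) := by
  have hf₀' : ∀ x ∈ Ico a b, 0 ≤ f x := mapsTo_Ico_of_mapsTo_Ioo hab hfc isClosed_Ici hf₀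
  refine mapsTo_Ico_of_mapsTo_Ioo hab hfc (isClosed_le (continuous_add_const (exp 1))
    continuous_const) fun t ht ↦ ?_
  have hIcc : Icc a t ⊆ Ico a b := Icc_subset_Ico_right ht.2
  have hac : AbsolutelyContinuousOnInterval f a t :=
    absolutelyContinuousOnInterval_of_eq_add_integral (hf'i t ht) fun x hx ↦
      hf x (hIcc (uIcc_of_le ht.1.le ▸ hx))
  calc f t + exp 1 ≤ (f a + exp 1) ^ exp (∫ x in a..t, g x) :=
        add_exp_le_rpow_of_ae_deriv_le ht.1.le hac (fun x hx ↦ hf₀' x (hIcc hx))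
          ((intervalIntegrable_iff_integrableOn_Ioc_of_le ht.1.le).2
            (hg.mono_set (Ioc_subset_Ioo_right ht.2)))
          (ae_restrict_of_ae_restrict_of_subset (Ioo_subset_Ioo_right ht.2.le) hf')
    _ ≤ (f a + exp 1) ^ exp (∫ x in Ioo a b, g x) := by
        gcongr
        · linarith [add_one_le_exp 1, hf₀' a (left_mem_Ico.2 hab)]
        · exact intervalIntegral_le_setIntegral_Ioo hg hg₀ ⟨ht.1.le, ht.2⟩

theorem intervalIntegral_le_of_add_half_le {f f' g h : ℝ → ℝ} {a b : ℝ} (hab : a ≤ b)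
    (hf'i : IntervalIntegrable f' volume a b) (hf : f b = f a + ∫ s in a..b, f' s)
    (hg : IntervalIntegrable g volume a b) (hh : IntervalIntegrable h volume a b)
    (hle : ∀ᵐ x ∂volume.restrict (Ioo a b), f' x + g x / 2 ≤ h x) :
    ∫ x in a..b, g x ≤ 2 * ((∫ x in a..b, h x) + f a - f b) := by
  have hle' : ∀ᵐ x ∂volume.restrict (Icc a b), g x ≤ 2 * (h x - f' x) := by
    rw [← Measure.restrict_congr_set Ioo_ae_eq_Icc]
    filter_upwards [hle] with x hx
    linarith
  have := intervalIntegral.integral_mono_ae_restrict hab hg ((hh.sub hf'i).const_mul 2) hle'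
  rw [intervalIntegral.integral_const_mul, intervalIntegral.integral_sub hh hf'i] at this
  linarith

theorem setIntegral_Ioo_le_of_add_half_le {f f' g h : ℝ → ℝ} {a b c : ℝ} (hab : a < b)
    (hf₀ : ∀ x ∈ Ioo a b, 0 ≤ f x) (hf'i : ∀ t ∈ Ioo a b, IntervalIntegrable f' volume a t)
    (hf : ∀ t ∈ Ico a b, f t = f a + ∫ s in a..t, f' s)
    (hg : IntegrableOn g (Ioo a b)) (hh : IntegrableOn h (Ioo a b))
    (hh₀ : ∀ x ∈ Ioo a b, 0 ≤ h x) (hc : 0 ≤ c)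
    (hle : ∀ᵐ x ∂volume.restrict (Ioo a b), f' x + g x / 2 ≤ c * h x) :
    ∫ x in Ioo a b, g x ≤ 2 * (c * (∫ x in Ioo a b, h x) + f a) := by
  refine setIntegral_Ioo_le_of_intervalIntegral_le hab hg fun t ht ↦ ?_
  have hsub : Ioc a t ⊆ Ioo a b := Ioc_subset_Ioo_right ht.2
  have := intervalIntegral_le_of_add_half_le ht.1.le (hf'i t ht)
    (hf t (Ioo_subset_Ico_self ht))
    ((intervalIntegrable_iff_integrableOn_Ioc_of_le ht.1.le).2 (hg.mono_set hsub))
    (((intervalIntegrable_iff_integrableOn_Ioc_of_le ht.1.le).2 (hh.mono_set hsub)).const_mul c)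
    (ae_restrict_of_ae_restrict_of_subset (Ioo_subset_Ioo_right ht.2.le) hle)
  rw [intervalIntegral.integral_const_mul] at this
  linarith [hf₀ t ht, mul_le_mul_of_nonneg_left
    (intervalIntegral_le_setIntegral_Ioo hh hh₀ (Ioo_subset_Ico_self ht)) hc]

/-- Let `0 < T < ∞`, and let `A, B` be nonnegative measurable functions on
`(0,T)`, with `A` absolutely continuous on `(0,T)` (encoded by the a.e. derivative `A'`
and the fundamental theorem of calculus representation) and continuous on `[0,T)`, satisfying
`A' + B ≤ n A log(A+B+e)` a.e. on `(0,T)`, where `n ≥ 0` belongs to `L¹((0,T))`. If in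
addition `n(t) ≤ K(A(t)+1)^α` on `(0,T)` for positive constants `K, α`, then
`sup_{0 ≤ t < T} A(t) < ∞` and `∫₀ᵀ B < ∞`, with a bound `Φ` depending only on `A(0)`, `K`,
`α`, `T`, and `∫₀ᵀ n`. -/
theorem statement7 :
    ∃ Φ : ℝ → ℝ → ℝ → ℝ → ℝ → ℝ,
      ∀ (T K α : ℝ) (A B A' n : ℝ → ℝ),
        0 < T → 0 < K → 0 < α →
        Measurable A → Measurable B →
        (∀ t ∈ Set.Ioo 0 T, 0 ≤ A t) → (∀ t ∈ Set.Ioo 0 T, 0 ≤ B t) →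
        (∀ t ∈ Set.Ioo 0 T, 0 ≤ n t) →
        IntegrableOn n (Set.Ioo 0 T) →
        ContinuousOn A (Set.Ico 0 T) →
        (∀ t ∈ Set.Ioo 0 T, IntervalIntegrable A' volume 0 t) →
        (∀ t ∈ Set.Ico 0 T, A t = A 0 + ∫ s in (0:ℝ)..t, A' s) →
        (∀ᵐ t ∂(volume.restrict (Set.Ioo 0 T)), HasDerivAt A (A' t) t) →
        (∀ᵐ t ∂(volume.restrict (Set.Ioo 0 T)),
          A' t + B t ≤ n t * A t * Real.log (A t + B t + Real.exp 1)) →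
        (∀ t ∈ Set.Ioo 0 T, n t ≤ K * (A t + 1) ^ α) →
        (∀ t ∈ Set.Ico 0 T, A t ≤ Φ (A 0) K α T (∫ s in Set.Ioo 0 T, n s)) ∧
          (∫ s in Set.Ioo 0 T, B s) ≤ Φ (A 0) K α T (∫ s in Set.Ioo 0 T, n s) := by
  refine ⟨fun a₀ K α _ N ↦
    let C := log (2 * K + exp 1) + α + 2
    let M := (a₀ + exp 1) ^ exp (C * N)
    max M (2 * (C * M * log M * N + a₀)), ?_⟩
  intro T K α A B A' n hT hK hα _ _ hA₀ hB₀ hn₀ hn hAc hA'i hFTC hderiv hineq hnK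
  set C := log (2 * K + exp 1) + α + 2
  set M := (A 0 + exp 1) ^ exp (C * ∫ s in Ioo 0 T, n s)
  have hC : 0 ≤ C := by
    linarith [log_nonneg (show 1 ≤ 2 * K + exp 1 by linarith [one_le_exp zero_le_one])]
  have hpt : ∀ᵐ t ∂volume.restrict (Ioo 0 T), t ∈ Ioo 0 T ∧ HasDerivAt A (A' t) t ∧
      A' t + B t / 2 ≤ C * n t * ((A t + exp 1) * log (A t + exp 1)) := by
    filter_upwards [hderiv, hineq, ae_restrict_mem measurableSet_Ioo] with t hd hi ht
    exact ⟨ht, hd, add_half_le_of_le_mul_log hK.le hα.le (hA₀ t ht) (hB₀ t ht) (hn₀ t ht)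
      (hnK t ht) hi⟩
  have hAM : ∀ t ∈ Ico 0 T, A t + exp 1 ≤ M := by
    simpa only [integral_const_mul] using
      add_exp_le_rpow_on_Ico_of_ae_deriv_le hT hAc hA₀ hA'i hFTC (hn.const_mul C)
        (fun t ht ↦ mul_nonneg hC (hn₀ t ht))
        (hpt.mono fun t ⟨ht, hd, hle⟩ ↦ ⟨hd, by linarith [hB₀ t ht]⟩)
  have hM : 1 ≤ M := by
    have ht : T / 2 ∈ Ioo 0 T := ⟨half_pos hT, half_lt_self hT⟩
    linarith [hAM _ (Ioo_subset_Ico_self ht), hA₀ _ ht, add_one_le_exp 1]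
  have hB : ∀ᵐ t ∂volume.restrict (Ioo 0 T), A' t + B t / 2 ≤ C * M * log M * n t :=
    hpt.mono fun t ⟨ht, _, hle⟩ ↦ by
      nlinarith [mul_le_mul_of_nonneg_left (add_exp_mul_log_le (hA₀ t ht)
        (hAM t (Ioo_subset_Ico_self ht))) (mul_nonneg hC (hn₀ t ht))]
  refine ⟨fun t ht ↦ le_max_of_le_left (by linarith [hAM t ht, exp_pos 1]), ?_⟩
  by_cases hBi : IntegrableOn B (Ioo 0 T)
  · exact le_max_of_le_right (setIntegral_Ioo_le_of_add_half_le hT hA₀ hA'i hFTC hBi hn hn₀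
      (mul_nonneg (mul_nonneg hC (by linarith)) (log_nonneg hM)) hB)
  · exact (integral_undef hBi).trans_le (le_max_of_le_left (by linarith))
end

section
/- Let h > 0 and Ω = (0,1)²×(-h,h), and let T be a bounded function on Ω, twice continuously differentiable in the horizontal variables and periodic in x and y with period 1. Then ‖∇_H T‖_{L⁴(Ω)}² ≤ 3 ‖T‖_{L^∞(Ω)} ‖Δ_H T‖_{L²(Ω)}. -/
open MeasureTheory Set

noncomputable section

/-- Partial derivative in the first horizontal variable. -/
def pdx (f : ℝ × ℝ → ℝ) (p : ℝ × ℝ) : ℝ := deriv (fun x => f (x, p.2)) p.1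

/-- Partial derivative in the second horizontal variable. -/
def pdy (f : ℝ × ℝ → ℝ) (p : ℝ × ℝ) : ℝ := deriv (fun y => f (p.1, y)) p.2

/-- The horizontal Laplacian `Δ_H f = ∂_x² f + ∂_y² f`. -/
def lapH (f : ℝ × ℝ → ℝ) (p : ℝ × ℝ) : ℝ := pdx (pdx f) p + pdy (pdy f) p

/-- The `L^∞(Ω)` norm of `T`. -/
def normLinf (h : ℝ) (T : (ℝ × ℝ) → ℝ → ℝ) : ℝ :=
  (eLpNorm (fun p : (ℝ × ℝ) × ℝ => T p.1 p.2) ⊤ (volume.restrict (Omg h))).toReal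

/-!
Fix a height `z` and let `f = T(·, ·, z)`, a `C²` function on the torus `ℝ² / ℤ²`. Two integrations
by parts give `∫ |∇f|⁴ = -∫ f · div (|∇f|² ∇f) = -∫ f (|∇f|² Δf + 2 ∇f · D²f ∇f)`, hence
`∫ |∇f|⁴ ≤ ‖f‖_∞ ∫ |∇f|² (|Δf| + 2 |D²f|) ≤ 3 ‖f‖_∞ ‖∇f‖₄² ‖Δf‖₂` by Cauchy–Schwarz, provided
`‖D²f‖₂ = ‖Δf‖₂`, i.e. `∫ f_xy² = ∫ f_xx f_yy`. For `C³` functions this is two more integrations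
by parts; for `C²` ones we prove its discrete analogue `∫ (D_s f_y)² = ∫ f_yy S_s f`, with `D_s`
and `S_s` the first and second difference quotients in `x`, and let `s → 0⁺` under dominated
convergence. The resulting bound `∫ |∇f|⁴ ≤ 9 ‖T‖_∞² ∫ (Δf)²` is then integrated over `z`.
-/

open Filter Topology
open scoped ENNReal

section PartialDerivatives

variable {f : ℝ × ℝ → ℝ}

theorem hasDerivAt_pdx (hf : Differentiable ℝ f) (x y : ℝ) :
    HasDerivAt (fun t => f (t, y)) (pdx f (x, y)) x :=
  ((hf _).comp x ((hasDerivAt_id x).prodMk (hasDerivAt_const x y)).differentiableAt).hasDerivAt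

theorem hasDerivAt_pdy (hf : Differentiable ℝ f) (x y : ℝ) :
    HasDerivAt (fun t => f (x, t)) (pdy f (x, y)) y :=
  ((hf _).comp y ((hasDerivAt_const y x).prodMk (hasDerivAt_id y)).differentiableAt).hasDerivAt

theorem pdx_eq_fderiv (hf : Differentiable ℝ f) : pdx f = fun p => fderiv ℝ f p (1, 0) := by
  ext ⟨x, y⟩
  exact ((hf (x, y)).hasFDerivAt.comp_hasDerivAt x
    ((hasDerivAt_id x).prodMk (hasDerivAt_const x y))).deriv

theorem pdy_eq_fderiv (hf : Differentiable ℝ f) : pdy f = fun p => fderiv ℝ f p (0, 1) := by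
  ext ⟨x, y⟩
  exact ((hf (x, y)).hasFDerivAt.comp_hasDerivAt y
    ((hasDerivAt_const y x).prodMk (hasDerivAt_id y))).deriv

variable {m n : WithTop ℕ∞}

theorem contDiff_pdx (hf : ContDiff ℝ n f) (hmn : m + 1 ≤ n) : ContDiff ℝ m (pdx f) := by
  rw [pdx_eq_fderiv (hf.differentiable ((zero_lt_one.trans_le (le_add_self.trans hmn)).ne'))]
  exact (hf.fderiv_right hmn).clm_apply contDiff_const

theorem contDiff_pdy (hf : ContDiff ℝ n f) (hmn : m + 1 ≤ n) : ContDiff ℝ m (pdy f) := by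
  rw [pdy_eq_fderiv (hf.differentiable ((zero_lt_one.trans_le (le_add_self.trans hmn)).ne'))]
  exact (hf.fderiv_right hmn).clm_apply contDiff_const

theorem pdx_pdy_eq_pdy_pdx (hf : ContDiff ℝ 2 f) : pdx (pdy f) = pdy (pdx f) := by
  have hf' : ContDiff ℝ 1 (fderiv ℝ f) := hf.fderiv_right (by norm_num)
  have hD : ∀ p, HasFDerivAt (fderiv ℝ f) (fderiv ℝ (fderiv ℝ f) p) p :=
    fun p => (hf'.differentiable one_ne_zero p).hasFDerivAt
  have hdiff : Differentiable ℝ f := hf.differentiable two_ne_zero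
  rw [pdy_eq_fderiv hdiff, pdx_eq_fderiv hdiff, pdx_eq_fderiv, pdy_eq_fderiv]
  · ext p
    have := second_derivative_symmetric (fun q => (hdiff q).hasFDerivAt) (hD p) (1, 0) (0, 1)
    have hDw : ∀ w : ℝ × ℝ, HasFDerivAt (fun q => fderiv ℝ f q w)
        ((ContinuousLinearMap.apply ℝ ℝ w).comp (fderiv ℝ (fderiv ℝ f) p)) p :=
      fun w => (ContinuousLinearMap.apply ℝ ℝ w).hasFDerivAt.comp p (hD p)
    rw [(hDw _).fderiv, (hDw _).fderiv]
    exact this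
  all_goals exact (hf'.clm_apply contDiff_const).differentiable one_ne_zero

theorem ContDiff.differentiable_pdx (hf : ContDiff ℝ 2 f) : Differentiable ℝ (pdx f) :=
  (contDiff_pdx (m := 1) hf (by norm_num)).differentiable one_ne_zero

theorem ContDiff.differentiable_pdy (hf : ContDiff ℝ 2 f) : Differentiable ℝ (pdy f) :=
  (contDiff_pdy (m := 1) hf (by norm_num)).differentiable one_ne_zero

theorem ContDiff.continuous_pdx_pdx (hf : ContDiff ℝ 2 f) : Continuous (pdx (pdx f)) :=
  (contDiff_pdx (m := 0) (contDiff_pdx (m := 1) hf (by norm_num)) (by norm_num)).continuous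

theorem ContDiff.continuous_pdx_pdy (hf : ContDiff ℝ 2 f) : Continuous (pdx (pdy f)) :=
  (contDiff_pdx (m := 0) (contDiff_pdy (m := 1) hf (by norm_num)) (by norm_num)).continuous

theorem ContDiff.continuous_pdy_pdy (hf : ContDiff ℝ 2 f) : Continuous (pdy (pdy f)) :=
  (contDiff_pdy (m := 0) (contDiff_pdy (m := 1) hf (by norm_num)) (by norm_num)).continuous

end PartialDerivatives

section Periodicity

def PeriodicX (f : ℝ × ℝ → ℝ) : Prop := ∀ x y, f (x + 1, y) = f (x, y)

def PeriodicY (f : ℝ × ℝ → ℝ) : Prop := ∀ x y, f (x, y + 1) = f (x, y)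

variable {f : ℝ × ℝ → ℝ}

theorem PeriodicX.pdx (hf : PeriodicX f) : PeriodicX (pdx f) := fun x y => by
  rw [_root_.pdx, ← deriv_comp_add_const]
  exact congrArg (deriv · x) (funext fun t => hf t y)

theorem PeriodicX.pdy (hf : PeriodicX f) : PeriodicX (pdy f) := fun x y =>
  congrArg (deriv · y) (funext fun t => hf x t)

theorem PeriodicY.pdx (hf : PeriodicY f) : PeriodicY (pdx f) := fun x y =>
  congrArg (deriv · x) (funext fun t => hf t y)

theorem PeriodicY.pdy (hf : PeriodicY f) : PeriodicY (pdy f) := fun x y => by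
  rw [_root_.pdy, ← deriv_comp_add_const]
  exact congrArg (deriv · y) (funext fun t => hf x t)

theorem Continuous.exists_abs_le_of_periodic (hc : Continuous f) (hx : PeriodicX f)
    (hy : PeriodicY f) : ∃ C, ∀ p, |f p| ≤ C := by
  obtain ⟨C, hC⟩ := isCompact_Icc.exists_bound_of_continuousOn
    (hc.continuousOn (s := Icc ((0 : ℝ), (0 : ℝ)) (1, 1)))
  refine ⟨C, fun ⟨x, y⟩ => ?_⟩
  have hpx : Function.Periodic (fun t => f (t, y)) 1 := fun t => hx t y
  obtain ⟨x', hx', hfx⟩ := hpx.exists_mem_Ico₀ one_pos x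
  have hpy : Function.Periodic (fun t => f (x', t)) 1 := fun t => hy x' t
  obtain ⟨y', hy', hfy⟩ := hpy.exists_mem_Ico₀ one_pos y
  rw [show f (x, y) = f (x', y') from hfx.trans hfy]
  exact hC _ ⟨⟨hx'.1, hy'.1⟩, ⟨hx'.2.le, hy'.2.le⟩⟩

end Periodicity

section

variable {α β : Type*} [MeasurableSpace α] [MeasurableSpace β] {μ : Measure α} {ν : Measure β}

theorem MemLp.ae_abs_le_toReal_eLpNorm_top {F : α → ℝ} (hF : MemLp F ⊤ μ) :
    ∀ᵐ a ∂μ, |F a| ≤ (eLpNorm F ⊤ μ).toReal := by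
  have hfin : eLpNormEssSup F μ ≠ ⊤ := by simpa only [eLpNorm_exponent_top] using hF.2.ne
  filter_upwards [ae_le_eLpNormEssSup (f := F) (μ := μ)] with a ha
  rw [eLpNorm_exponent_top, ← Real.norm_eq_abs, ← toReal_enorm]
  exact ENNReal.toReal_mono hfin ha

theorem integral_integral_le_const_mul_of_ae [SFinite μ] [SFinite ν] {F G : α × β → ℝ}
    (hF : Integrable F (μ.prod ν)) (hG : Integrable G (μ.prod ν)) {c : ℝ}
    (h : ∀ᵐ y ∂ν, ∫ x, F (x, y) ∂μ ≤ c * ∫ x, G (x, y) ∂μ) :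
    ∫ x, ∫ y, F (x, y) ∂ν ∂μ ≤ c * ∫ x, ∫ y, G (x, y) ∂ν ∂μ := by
  rw [integral_integral_swap (f := fun x y => F (x, y)) hF,
    integral_integral_swap (f := fun x y => G (x, y)) hG, ← integral_const_mul]
  exact integral_mono_ae hF.integral_prod_right (hG.integral_prod_right.const_mul c) h

theorem integral_mul_le_sqrt_mul_sqrt {F G : α → ℝ} (hF0 : 0 ≤ᵐ[μ] F) (hG0 : 0 ≤ᵐ[μ] G)
    (hF : MemLp F 2 μ) (hG : MemLp G 2 μ) :
    ∫ a, F a * G a ∂μ ≤ √(∫ a, F a ^ 2 ∂μ) * √(∫ a, G a ^ 2 ∂μ) := by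
  have h := integral_mul_le_Lp_mul_Lq_of_nonneg Real.HolderConjugate.two_two hF0 hG0
    (by rwa [ENNReal.ofReal_ofNat]) (by rwa [ENNReal.ofReal_ofNat])
  simpa only [Real.rpow_two, Real.sqrt_eq_rpow] using h

end

section IntegralsOnTheSquare

variable {F : ℝ × ℝ → ℝ}

theorem volume_restrict_Msq :
    volume.restrict Msq = (volume.restrict (Ioo (0 : ℝ) 1)).prod (volume.restrict (Ioo 0 1)) := by
  rw [Measure.prod_restrict, ← Measure.volume_eq_prod, Msq]

instance : IsFiniteMeasure (volume.restrict Msq) := by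
  rw [volume_restrict_Msq]; infer_instance

theorem Continuous.memLp_Msq (hF : Continuous F) (q : ℝ≥0∞) :
    MemLp F q (volume.restrict Msq) := by
  obtain ⟨C, hC⟩ := isCompact_Icc.exists_bound_of_continuousOn
    (hF.continuousOn (s := Icc ((0 : ℝ), (0 : ℝ)) (1, 1)))
  refine MemLp.of_bound hF.aestronglyMeasurable C (ae_restrict_of_forall_mem
    (measurableSet_Ioo.prod measurableSet_Ioo) fun ⟨x, y⟩ ⟨hx, hy⟩ => hC _ ?_)
  exact ⟨⟨hx.1.le, hy.1.le⟩, ⟨hx.2.le, hy.2.le⟩⟩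

theorem Continuous.integrableOn_Msq (hF : Continuous F) : IntegrableOn F Msq :=
  memLp_one_iff_integrable.1 (hF.memLp_Msq 1)

theorem integral_Msq_eq_integral_integral (hF : IntegrableOn F Msq) :
    ∫ p in Msq, F p = ∫ y in (0 : ℝ)..1, ∫ x in (0 : ℝ)..1, F (x, y) := by
  rw [IntegrableOn, volume_restrict_Msq] at hF
  simp only [volume_restrict_Msq, integral_prod_symm F hF,
    intervalIntegral.integral_of_le zero_le_one, integral_Ioc_eq_integral_Ioo]

theorem integral_Msq_comp_swap (F : ℝ × ℝ → ℝ) : ∫ p in Msq, F p.swap = ∫ p in Msq, F p := by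
  have hMsq : Prod.swap ⁻¹' Msq = Msq := by
    ext p; simp only [Msq, mem_preimage, mem_prod, Prod.fst_swap, Prod.snd_swap]; tauto
  conv_lhs => rw [← hMsq]
  exact (Measure.measurePreserving_swap (μ := volume) (ν := volume)).setIntegral_preimage_emb
    MeasurableEquiv.prodComm.measurableEmbedding F Msq

theorem integral_Msq_comp_add_fst (hF : Continuous F) (hp : PeriodicX F) (s : ℝ) :
    ∫ p in Msq, F (p.1 + s, p.2) = ∫ p in Msq, F p := by
  rw [integral_Msq_eq_integral_integral (by fun_prop : Continuous _).integrableOn_Msq,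
    integral_Msq_eq_integral_integral hF.integrableOn_Msq]
  refine intervalIntegral.integral_congr fun y _ => ?_
  have hpy : Function.Periodic (fun x => F (x, y)) 1 := fun x => hp x y
  rw [intervalIntegral.integral_comp_add_right (fun x => F (x, y)), zero_add, add_comm,
    hpy.intervalIntegral_add_eq s 0, zero_add]

end IntegralsOnTheSquare

section IntegrationByParts

variable {u u' w w' : ℝ × ℝ → ℝ}

theorem integral_Msq_mul_derivX_eq_neg (hu : ∀ x y, HasDerivAt (fun t => u (t, y)) (u' (x, y)) x)
    (hw : ∀ x y, HasDerivAt (fun t => w (t, y)) (w' (x, y)) x)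
    (hcu : Continuous u) (hcu' : Continuous u') (hcw : Continuous w) (hcw' : Continuous w')
    (hpu : PeriodicX u) (hpw : PeriodicX w) :
    ∫ p in Msq, u p * w' p = -∫ p in Msq, u' p * w p := by
  rw [integral_Msq_eq_integral_integral (by fun_prop : Continuous _).integrableOn_Msq,
    integral_Msq_eq_integral_integral (by fun_prop : Continuous _).integrableOn_Msq,
    ← intervalIntegral.integral_neg]
  refine intervalIntegral.integral_congr fun y _ => ?_
  rw [intervalIntegral.integral_mul_deriv_eq_deriv_mul (fun x _ => hu x y) (fun x _ => hw x y)
    ((by fun_prop : Continuous fun x => u' (x, y)).intervalIntegrable _ _)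
    ((by fun_prop : Continuous fun x => w' (x, y)).intervalIntegrable _ _),
    ← zero_add (1 : ℝ), hpu, hpw, sub_self, zero_sub]

theorem integral_Msq_mul_derivY_eq_neg (hu : ∀ x y, HasDerivAt (fun t => u (x, t)) (u' (x, y)) y)
    (hw : ∀ x y, HasDerivAt (fun t => w (x, t)) (w' (x, y)) y)
    (hcu : Continuous u) (hcu' : Continuous u') (hcw : Continuous w) (hcw' : Continuous w')
    (hpu : PeriodicY u) (hpw : PeriodicY w) :
    ∫ p in Msq, u p * w' p = -∫ p in Msq, u' p * w p := by
  have := integral_Msq_mul_derivX_eq_neg (u := u ∘ Prod.swap) (u' := u' ∘ Prod.swap)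
    (w := w ∘ Prod.swap) (w' := w' ∘ Prod.swap) (fun x y => hu y x) (fun x y => hw y x)
    (by fun_prop) (by fun_prop) (by fun_prop) (by fun_prop) (fun x y => hpu y x)
    (fun x y => hpw y x)
  simpa only [Function.comp_apply, integral_Msq_comp_swap (fun p => u p * w' p),
    integral_Msq_comp_swap (fun p => u' p * w p)] using this

end IntegrationByParts


section SecondDifferences

variable {g : ℝ → ℝ}

theorem abs_slope_le_of_abs_deriv_le (hg : Differentiable ℝ g) {C : ℝ} (hC : ∀ t, |deriv g t| ≤ C)
    (x : ℝ) {s : ℝ} (hs : 0 < s) : |(g (x + s) - g x) / s| ≤ C := by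
  obtain ⟨ξ, -, hξ⟩ := exists_deriv_eq_slope g (lt_add_of_pos_right x hs)
    hg.continuous.continuousOn hg.differentiableOn
  rw [add_sub_cancel_left] at hξ
  exact hξ ▸ hC ξ

theorem exists_secondDiff_eq_deriv_deriv (hg : ContDiff ℝ 2 g) (x : ℝ) {s : ℝ} (hs : 0 < s) :
    ∃ η ∈ Ioo (x - s) (x + s),
      (g (x + s) + g (x - s) - 2 * g x) / s ^ 2 = deriv (deriv g) η := by
  have hd : Differentiable ℝ g := hg.differentiable two_ne_zero
  have hd' : Differentiable ℝ (deriv g) := hg.deriv'.differentiable one_ne_zero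
  have hc : Continuous g := hd.continuous
  -- the mean value theorem for `t ↦ g (t + s) - g t` on `[x - s, x]`, then for `deriv g`
  obtain ⟨ξ, hξ, hξeq⟩ := exists_hasDerivAt_eq_slope (fun t => g (t + s) - g t)
    (fun t => deriv g (t + s) - deriv g t) (sub_lt_self x hs) (by fun_prop)
    fun t _ => ((hd (t + s)).hasDerivAt.comp_add_const t s).sub (hd t).hasDerivAt
  obtain ⟨η, hη, hηeq⟩ := exists_deriv_eq_slope (deriv g) (lt_add_of_pos_right ξ hs)
    hd'.continuous.continuousOn hd'.differentiableOn
  refine ⟨η, ⟨by linarith [hξ.1, hη.1], by linarith [hξ.2, hη.2]⟩, ?_⟩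
  rw [hηeq, hξeq, sub_add_cancel, sub_sub_cancel, add_sub_cancel_left]
  field_simp
  ring

theorem tendsto_secondDiff (hg : ContDiff ℝ 2 g) (x : ℝ) :
    Tendsto (fun s => (g (x + s) + g (x - s) - 2 * g x) / s ^ 2) (𝓝[>] 0)
      (𝓝 (deriv (deriv g) x)) := by
  have hcont : Continuous (deriv (deriv g)) := hg.deriv'.continuous_deriv le_rfl
  rw [Metric.tendsto_nhdsWithin_nhds]
  intro ε hε
  obtain ⟨δ, hδ, hδε⟩ := Metric.continuous_iff.1 hcont x ε hε
  refine ⟨δ, hδ, fun s (hs : 0 < s) hsδ => ?_⟩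
  obtain ⟨η, hη, heq⟩ := exists_secondDiff_eq_deriv_deriv hg x hs
  rw [heq]
  refine hδε η ?_
  rw [Real.dist_eq, sub_zero, abs_of_pos hs] at hsδ
  rw [Real.dist_eq, abs_lt]
  constructor <;> linarith [hη.1, hη.2]

end SecondDifferences

section HessianIdentity

def diffQuotX (s : ℝ) (f : ℝ × ℝ → ℝ) (p : ℝ × ℝ) : ℝ := (f (p.1 + s, p.2) - f p) / s

def secondDiffQuotX (s : ℝ) (f : ℝ × ℝ → ℝ) (p : ℝ × ℝ) : ℝ :=
  (f (p.1 + s, p.2) + f (p.1 - s, p.2) - 2 * f p) / s ^ 2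

variable {f g : ℝ × ℝ → ℝ}

theorem Continuous.diffQuotX (hf : Continuous f) (s : ℝ) : Continuous (diffQuotX s f) := by
  unfold _root_.diffQuotX; fun_prop

theorem Continuous.secondDiffQuotX (hf : Continuous f) (s : ℝ) :
    Continuous (secondDiffQuotX s f) := by
  unfold _root_.secondDiffQuotX; fun_prop

theorem PeriodicX.diffQuotX (hf : PeriodicX f) (s : ℝ) : PeriodicX (diffQuotX s f) :=
  fun x y => by simp only [_root_.diffQuotX, add_right_comm x 1 s, hf (x + s) y, hf x y]

theorem PeriodicY.diffQuotX (hf : PeriodicY f) (s : ℝ) : PeriodicY (diffQuotX s f) :=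
  fun x y => by simp only [_root_.diffQuotX, hf (x + s) y, hf x y]

theorem integral_Msq_diffQuotX_mul_diffQuotX (hf : Continuous f) (hg : Continuous g)
    (hpf : PeriodicX f) (hpg : PeriodicX g) {s : ℝ} (hs : s ≠ 0) :
    ∫ p in Msq, diffQuotX s g p * diffQuotX s f p = -∫ p in Msq, g p * secondDiffQuotX s f p := by
  set D := diffQuotX s f
  have hD : Continuous D := hf.diffQuotX s
  have hpD : PeriodicX D := hpf.diffQuotX s
  have hshift : ∫ p in Msq, g (p.1 + s, p.2) * D p = ∫ p in Msq, g p * D (p.1 - s, p.2) := by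
    have hper : PeriodicX fun p => g p * D (p.1 - s, p.2) := fun x y => by
      simp only [add_sub_right_comm x 1 s, hpg x y, hpD (x - s) y]
    simpa only [add_sub_cancel_right] using integral_Msq_comp_add_fst (by fun_prop) hper s
  calc ∫ p in Msq, diffQuotX s g p * D p
      = ∫ p in Msq, (g (p.1 + s, p.2) * D p - g p * D p) / s := by
        congr 1; funext p; simp only [_root_.diffQuotX]; ring
    _ = ((∫ p in Msq, g (p.1 + s, p.2) * D p) - ∫ p in Msq, g p * D p) / s := by
        rw [integral_div, integral_sub (Continuous.integrableOn_Msq (by fun_prop))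
          (Continuous.integrableOn_Msq (by fun_prop))]
    _ = ((∫ p in Msq, g p * D (p.1 - s, p.2)) - ∫ p in Msq, g p * D p) / s := by rw [hshift]
    _ = ∫ p in Msq, (g p * D (p.1 - s, p.2) - g p * D p) / s := by
        rw [integral_div, integral_sub (Continuous.integrableOn_Msq (by fun_prop))
          (Continuous.integrableOn_Msq (by fun_prop))]
    _ = -∫ p in Msq, g p * secondDiffQuotX s f p := by
        rw [← integral_neg]
        congr 1; funext p
        simp only [D, _root_.diffQuotX, secondDiffQuotX, sub_add_cancel]
        field_simp
        ring

theorem integral_Msq_diffQuotX_pdy_sq (hf : ContDiff ℝ 2 f) (hx : PeriodicX f) (hy : PeriodicY f)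
    {s : ℝ} (hs : s ≠ 0) :
    ∫ p in Msq, diffQuotX s (pdy f) p ^ 2 = ∫ p in Msq, pdy (pdy f) p * secondDiffQuotX s f p := by
  have hd : Differentiable ℝ f := hf.differentiable two_ne_zero
  have hd' : Differentiable ℝ (pdy f) := hf.differentiable_pdy
  have hibp := integral_Msq_mul_derivY_eq_neg
    (u := diffQuotX s (pdy f)) (u' := diffQuotX s (pdy (pdy f)))
    (w := diffQuotX s f) (w' := diffQuotX s (pdy f))
    (fun x y => ((hasDerivAt_pdy hd' (x + s) y).sub (hasDerivAt_pdy hd' x y)).div_const s)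
    (fun x y => ((hasDerivAt_pdy hd (x + s) y).sub (hasDerivAt_pdy hd x y)).div_const s)
    (hd'.continuous.diffQuotX s) (hf.continuous_pdy_pdy.diffQuotX s)
    (hd.continuous.diffQuotX s) (hd'.continuous.diffQuotX s)
    (hy.pdy.diffQuotX s) (hy.diffQuotX s)
  simp only [sq]
  rw [hibp, integral_Msq_diffQuotX_mul_diffQuotX hd.continuous hf.continuous_pdy_pdy hx
    hx.pdy.pdy hs, neg_neg]

theorem tendsto_integral_Msq_diffQuotX_sq (hf : ContDiff ℝ 1 f) (hx : PeriodicX (pdx f))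
    (hy : PeriodicY (pdx f)) :
    Tendsto (fun s => ∫ p in Msq, diffQuotX s f p ^ 2) (𝓝[>] 0)
      (𝓝 (∫ p in Msq, pdx f p ^ 2)) := by
  have hd : Differentiable ℝ f := hf.differentiable one_ne_zero
  obtain ⟨C, hC⟩ := (contDiff_pdx (m := 0) hf le_rfl).continuous.exists_abs_le_of_periodic hx hy
  refine tendsto_integral_filter_of_dominated_convergence (fun _ => C ^ 2)
    (Eventually.of_forall fun s => ((hd.continuous.diffQuotX s).pow 2).aestronglyMeasurable)
    ?_ (integrable_const _) (ae_of_all _ fun ⟨x, y⟩ => ?_)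
  · filter_upwards [self_mem_nhdsWithin] with s (hs : 0 < s)
    refine ae_of_all _ fun ⟨x, y⟩ => ?_
    rw [Real.norm_eq_abs, abs_pow]
    exact pow_le_pow_left₀ (abs_nonneg _) (abs_slope_le_of_abs_deriv_le
      (hd.comp (differentiable_id.prodMk (differentiable_const y))) (fun t => hC (t, y)) x hs) 2
  · have h := ((hasDerivAt_pdx hd x y).tendsto_slope_zero_right).pow 2
    simp only [smul_eq_mul, inv_mul_eq_div] at h
    exact h

theorem tendsto_integral_Msq_mul_secondDiffQuotX (hf : ContDiff ℝ 2 f) (hx : PeriodicX f)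
    (hy : PeriodicY f) {g : ℝ × ℝ → ℝ} (hg : Continuous g) (hgx : PeriodicX g)
    (hgy : PeriodicY g) :
    Tendsto (fun s => ∫ p in Msq, g p * secondDiffQuotX s f p) (𝓝[>] 0)
      (𝓝 (∫ p in Msq, g p * pdx (pdx f) p)) := by
  obtain ⟨C, hC⟩ := hf.continuous_pdx_pdx.exists_abs_le_of_periodic hx.pdx.pdx hy.pdx.pdx
  obtain ⟨C', hC'⟩ := hg.exists_abs_le_of_periodic hgx hgy
  have hslice : ∀ y, ContDiff ℝ 2 fun t => f (t, y) :=
    fun y => hf.comp (contDiff_id.prodMk contDiff_const)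
  refine tendsto_integral_filter_of_dominated_convergence (fun _ => C' * C)
    (Eventually.of_forall fun s => (hg.mul (hf.continuous.secondDiffQuotX s)).aestronglyMeasurable)
    ?_ (integrable_const _) (ae_of_all _ fun ⟨x, y⟩ => ?_)
  · filter_upwards [self_mem_nhdsWithin] with s (hs : 0 < s)
    refine ae_of_all _ fun ⟨x, y⟩ => ?_
    obtain ⟨η, -, hη⟩ := exists_secondDiff_eq_deriv_deriv (hslice y) x hs
    have hη' : secondDiffQuotX s f (x, y) = pdx (pdx f) (η, y) := hη
    rw [Real.norm_eq_abs, abs_mul, hη']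
    exact mul_le_mul (hC' _) (hC _) (abs_nonneg _) ((abs_nonneg _).trans (hC' (x, y)))
  · exact (tendsto_secondDiff (hslice y) x).const_mul _

theorem integral_Msq_pdx_pdy_sq (hf : ContDiff ℝ 2 f) (hx : PeriodicX f) (hy : PeriodicY f) :
    ∫ p in Msq, pdx (pdy f) p ^ 2 = ∫ p in Msq, pdy (pdy f) p * pdx (pdx f) p := by
  refine tendsto_nhds_unique ((tendsto_integral_Msq_diffQuotX_sq
    (contDiff_pdy (m := 1) hf (by norm_num)) hx.pdy.pdx hy.pdy.pdx).congr' ?_)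
    (tendsto_integral_Msq_mul_secondDiffQuotX hf hx hy hf.continuous_pdy_pdy hx.pdy.pdy hy.pdy.pdy)
  filter_upwards [self_mem_nhdsWithin] with s (hs : 0 < s)
  exact integral_Msq_diffQuotX_pdy_sq hf hx hy hs.ne'

end HessianIdentity

section SliceInequality

def gradSq (f : ℝ × ℝ → ℝ) (p : ℝ × ℝ) : ℝ := pdx f p ^ 2 + pdy f p ^ 2

def gradHessGrad (f : ℝ × ℝ → ℝ) (p : ℝ × ℝ) : ℝ :=
  pdx f p ^ 2 * pdx (pdx f) p + 2 * pdx f p * pdy f p * pdx (pdy f) p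
    + pdy f p ^ 2 * pdy (pdy f) p

/-- The Frobenius norm of the Hessian, its two equal mixed partials written as one. -/
def hessNorm (f : ℝ × ℝ → ℝ) (p : ℝ × ℝ) : ℝ :=
  √(pdx (pdx f) p ^ 2 + 2 * pdx (pdy f) p ^ 2 + pdy (pdy f) p ^ 2)

theorem abs_quadraticForm_le (u v a b c : ℝ) :
    |u ^ 2 * a + 2 * u * v * b + v ^ 2 * c| ≤ (u ^ 2 + v ^ 2) * √(a ^ 2 + 2 * b ^ 2 + c ^ 2) := by
  rw [← Real.sqrt_sq_eq_abs, ← Real.sqrt_sq (by positivity : 0 ≤ u ^ 2 + v ^ 2),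
    ← Real.sqrt_mul (by positivity)]
  refine Real.sqrt_le_sqrt ?_
  nlinarith [sq_nonneg (u * (u * b - v * a)), sq_nonneg (u ^ 2 * c - v ^ 2 * a),
    sq_nonneg (v * (u * c - v * b)), sq_nonneg (u * b - v * a), sq_nonneg (u * c - v * b)]

theorem neg_mul_le_of_abs_le_of_abs_le {a b c d : ℝ} (ha : |a| ≤ c) (hb : |b| ≤ d) :
    -(a * b) ≤ d * c :=
  calc -(a * b) ≤ |a| * |b| := by rw [← abs_mul]; exact neg_le_abs _
    _ ≤ c * d := mul_le_mul ha hb (abs_nonneg _) ((abs_nonneg _).trans ha)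
    _ = d * c := mul_comm _ _

theorem le_sq_of_le_mul_sqrt {a b : ℝ} (ha : 0 ≤ a) (h : a ≤ b * √a) : a ≤ b ^ 2 := by
  nlinarith [Real.sq_sqrt ha, Real.sqrt_nonneg a, sq_nonneg (b - √a)]

variable {f : ℝ × ℝ → ℝ}

theorem gradSq_nonneg (f : ℝ × ℝ → ℝ) (p : ℝ × ℝ) : 0 ≤ gradSq f p := by
  unfold gradSq; positivity

theorem abs_gradSq_mul_lapH_add_gradHessGrad_le (f : ℝ × ℝ → ℝ) (p : ℝ × ℝ) :
    |gradSq f p * lapH f p + 2 * gradHessGrad f p|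
      ≤ gradSq f p * |lapH f p| + 2 * (gradSq f p * hessNorm f p) := by
  refine (abs_add_le _ _).trans ?_
  rw [abs_mul, abs_of_nonneg (gradSq_nonneg f p), abs_mul, abs_two]
  gcongr
  exact abs_quadraticForm_le _ _ _ _ _

theorem ContDiff.continuous_gradSq (hf : ContDiff ℝ 2 f) : Continuous (gradSq f) := by
  have := hf.differentiable_pdx.continuous
  have := hf.differentiable_pdy.continuous
  unfold gradSq; fun_prop

theorem ContDiff.continuous_lapH (hf : ContDiff ℝ 2 f) : Continuous (lapH f) :=
  hf.continuous_pdx_pdx.add hf.continuous_pdy_pdy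

theorem ContDiff.continuous_gradHessGrad (hf : ContDiff ℝ 2 f) : Continuous (gradHessGrad f) := by
  have := hf.differentiable_pdx.continuous
  have := hf.differentiable_pdy.continuous
  have := hf.continuous_pdx_pdx
  have := hf.continuous_pdx_pdy
  have := hf.continuous_pdy_pdy
  unfold gradHessGrad; fun_prop

theorem ContDiff.continuous_hessNorm (hf : ContDiff ℝ 2 f) : Continuous (hessNorm f) := by
  have := hf.continuous_pdx_pdx
  have := hf.continuous_pdx_pdy
  have := hf.continuous_pdy_pdy
  unfold hessNorm; fun_prop

theorem integral_Msq_gradSq_sq_eq (hf : ContDiff ℝ 2 f) (hx : PeriodicX f) (hy : PeriodicY f) :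
    ∫ p in Msq, gradSq f p ^ 2
      = -∫ p in Msq, (gradSq f p * lapH f p + 2 * gradHessGrad f p) * f p := by
  have hd : Differentiable ℝ f := hf.differentiable two_ne_zero
  have hdx : Differentiable ℝ (pdx f) := hf.differentiable_pdx
  have hdy : Differentiable ℝ (pdy f) := hf.differentiable_pdy
  have hxx := hf.continuous_pdx_pdx
  have hxy := hf.continuous_pdx_pdy
  have hyy := hf.continuous_pdy_pdy
  have hyx : Continuous (pdy (pdx f)) := pdx_pdy_eq_pdy_pdx hf ▸ hxy
  have hcx := hdx.continuous
  have hcy := hdy.continuous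
  have hc := hf.continuous
  have hg := hf.continuous_gradSq
  have hibpX := integral_Msq_mul_derivX_eq_neg (u := fun p => gradSq f p * pdx f p) (w := f)
    (u' := fun p => (2 * pdx f p * pdx (pdx f) p + 2 * pdy f p * pdx (pdy f) p) * pdx f p
      + gradSq f p * pdx (pdx f) p)
    (fun x y => ((((hasDerivAt_pdx hdx x y).pow 2).add ((hasDerivAt_pdx hdy x y).pow 2)).mul
      (hasDerivAt_pdx hdx x y)).congr_deriv
        (by simp only [gradSq, Pi.add_apply, Pi.pow_apply]; ring))
    (hasDerivAt_pdx hd) (by fun_prop) (by fun_prop) hc hcx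
    (fun x y => by simp only [gradSq, hx.pdx x y, hx.pdy x y]) hx
  have hibpY := integral_Msq_mul_derivY_eq_neg (u := fun p => gradSq f p * pdy f p) (w := f)
    (u' := fun p => (2 * pdx f p * pdy (pdx f) p + 2 * pdy f p * pdy (pdy f) p) * pdy f p
      + gradSq f p * pdy (pdy f) p)
    (fun x y => ((((hasDerivAt_pdy hdx x y).pow 2).add ((hasDerivAt_pdy hdy x y).pow 2)).mul
      (hasDerivAt_pdy hdy x y)).congr_deriv
        (by simp only [gradSq, Pi.add_apply, Pi.pow_apply]; ring))
    (hasDerivAt_pdy hd) (by fun_prop) (by fun_prop) hc hcy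
    (fun x y => by simp only [gradSq, hy.pdx x y, hy.pdy x y]) hy
  calc ∫ p in Msq, gradSq f p ^ 2
      = (∫ p in Msq, gradSq f p * pdx f p * pdx f p)
          + ∫ p in Msq, gradSq f p * pdy f p * pdy f p := by
        rw [← integral_add (Continuous.integrableOn_Msq (by fun_prop))
          (Continuous.integrableOn_Msq (by fun_prop))]
        congr 1; funext p; simp only [gradSq]; ring
    _ = -∫ p in Msq, (gradSq f p * lapH f p + 2 * gradHessGrad f p) * f p := by
        rw [hibpX, hibpY, ← neg_add, ← integral_add (Continuous.integrableOn_Msq (by fun_prop))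
          (Continuous.integrableOn_Msq (by fun_prop))]
        congr 2; funext p
        simp only [gradSq, gradHessGrad, lapH, pdx_pdy_eq_pdy_pdx hf]
        ring

theorem integral_Msq_hessNorm_sq (hf : ContDiff ℝ 2 f) (hx : PeriodicX f) (hy : PeriodicY f) :
    ∫ p in Msq, hessNorm f p ^ 2 = ∫ p in Msq, lapH f p ^ 2 := by
  have hxx := hf.continuous_pdx_pdx
  have hxy := hf.continuous_pdx_pdy
  have hyy := hf.continuous_pdy_pdy
  have hlap := hf.continuous_lapH
  calc ∫ p in Msq, hessNorm f p ^ 2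
      = ∫ p in Msq, (pdx (pdx f) p ^ 2 + 2 * pdx (pdy f) p ^ 2 + pdy (pdy f) p ^ 2) := by
        congr 1; funext p; exact Real.sq_sqrt (by positivity)
    _ = (∫ p in Msq, lapH f p ^ 2) + 2 * ((∫ p in Msq, pdx (pdy f) p ^ 2)
          - ∫ p in Msq, pdy (pdy f) p * pdx (pdx f) p) := by
        rw [← integral_sub (Continuous.integrableOn_Msq (by fun_prop))
            (Continuous.integrableOn_Msq (by fun_prop)), ← integral_const_mul,
          ← integral_add (Continuous.integrableOn_Msq (by fun_prop))
            (Continuous.integrableOn_Msq (by fun_prop))]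
        congr 1; funext p; simp only [lapH]; ring
    _ = ∫ p in Msq, lapH f p ^ 2 := by
        rw [integral_Msq_pdx_pdy_sq hf hx hy, sub_self, mul_zero, add_zero]

theorem integral_Msq_gradSq_sq_le (hf : ContDiff ℝ 2 f) (hx : PeriodicX f) (hy : PeriodicY f)
    {M : ℝ} (hM0 : 0 ≤ M) (hM : ∀ᵐ p ∂volume.restrict Msq, |f p| ≤ M) :
    ∫ p in Msq, gradSq f p ^ 2 ≤ 9 * M ^ 2 * ∫ p in Msq, lapH f p ^ 2 := by
  set I := ∫ p in Msq, gradSq f p ^ 2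
  set J := ∫ p in Msq, lapH f p ^ 2
  have hc := hf.continuous
  have hg := hf.continuous_gradSq
  have hlap := hf.continuous_lapH
  have hhess := hf.continuous_hessNorm
  have hQ := hf.continuous_gradHessGrad
  have hg0 : 0 ≤ᵐ[volume.restrict Msq] gradSq f := ae_of_all _ (gradSq_nonneg f)
  have hcs₁ : ∫ p in Msq, gradSq f p * |lapH f p| ≤ √I * √J := by
    simpa only [sq_abs] using integral_mul_le_sqrt_mul_sqrt hg0
      (ae_of_all _ fun p => abs_nonneg _) (hg.memLp_Msq 2) (hlap.abs.memLp_Msq 2)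
  have hcs₂ : ∫ p in Msq, gradSq f p * hessNorm f p ≤ √I * √J := by
    calc _ ≤ √I * √(∫ p in Msq, hessNorm f p ^ 2) :=
          integral_mul_le_sqrt_mul_sqrt hg0 (ae_of_all _ fun p => Real.sqrt_nonneg _)
            (hg.memLp_Msq 2) (hhess.memLp_Msq 2)
      _ = √I * √J := by rw [integral_Msq_hessNorm_sq hf hx hy]
  have key : I ≤ 3 * M * √J * √I :=
    calc I = ∫ p in Msq, -((gradSq f p * lapH f p + 2 * gradHessGrad f p) * f p) := by
          rw [integral_neg]; exact integral_Msq_gradSq_sq_eq hf hx hy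
      _ ≤ ∫ p in Msq, M * (gradSq f p * |lapH f p| + 2 * (gradSq f p * hessNorm f p)) :=
          integral_mono_ae (Continuous.integrableOn_Msq (by fun_prop))
            (Continuous.integrableOn_Msq (by fun_prop)) (hM.mono fun p hp =>
              neg_mul_le_of_abs_le_of_abs_le (abs_gradSq_mul_lapH_add_gradHessGrad_le f p) hp)
      _ = M * ((∫ p in Msq, gradSq f p * |lapH f p|)
            + 2 * ∫ p in Msq, gradSq f p * hessNorm f p) := by
          rw [integral_const_mul, integral_add (Continuous.integrableOn_Msq (by fun_prop))
            (Continuous.integrableOn_Msq (by fun_prop)), integral_const_mul]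
      _ ≤ M * (√I * √J + 2 * (√I * √J)) := by gcongr
      _ = 3 * M * √J * √I := by ring
  calc I ≤ (3 * M * √J) ^ 2 := le_sq_of_le_mul_sqrt (integral_nonneg fun p => by positivity) key
    _ = 9 * M ^ 2 * J := by
      rw [mul_pow, Real.sq_sqrt (integral_nonneg fun p => by positivity)]
      ring

end SliceInequality

theorem volume_restrict_Omg (h : ℝ) :
    volume.restrict (Omg h) = (volume.restrict Msq).prod (volume.restrict (Ioo (-h) h)) := by
  rw [Measure.prod_restrict, ← Measure.volume_eq_prod, Omg]

theorem ae_ae_abs_le_normLinf {h : ℝ} {T : ℝ × ℝ → ℝ → ℝ}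
    (hT : MemLp (fun p : (ℝ × ℝ) × ℝ => T p.1 p.2) ⊤ (volume.restrict (Omg h))) :
    ∀ᵐ z ∂volume.restrict (Ioo (-h) h), ∀ᵐ xy ∂volume.restrict Msq, |T xy z| ≤ normLinf h T := by
  have hT' : ∀ᵐ p ∂volume.restrict (Omg h), |T p.1 p.2| ≤ normLinf h T :=
    MemLp.ae_abs_le_toReal_eLpNorm_top hT
  rw [volume_restrict_Omg] at hT'
  exact Measure.ae_ae_of_ae_prod ((Measure.measurePreserving_swap).quasiMeasurePreserving.ae hT')

theorem statement13_general (h : ℝ) (T : (ℝ × ℝ) → ℝ → ℝ)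
    (hsm : ∀ z : ℝ, ContDiff ℝ 2 (fun p => T p z))
    (hperx : ∀ x y z : ℝ, T (x + 1, y) z = T (x, y) z)
    (hpery : ∀ x y z : ℝ, T (x, y + 1) z = T (x, y) z)
    (hbdd : MemLp (fun p : (ℝ × ℝ) × ℝ => T p.1 p.2) ⊤ (volume.restrict (Omg h)))
    (hint4 : IntegrableOn (fun p : (ℝ × ℝ) × ℝ =>
      ((pdx (fun w => T w p.2) p.1) ^ 2 + (pdy (fun w => T w p.2) p.1) ^ 2) ^ 2) (Omg h))
    (hint2 : IntegrableOn (fun p : (ℝ × ℝ) × ℝ => (lapH (fun w => T w p.2) p.1) ^ 2) (Omg h)) :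
    ((∫ xy in Msq, ∫ z in Set.Ioo (-h) h,
          ((pdx (fun w => T w z) xy) ^ 2 + (pdy (fun w => T w z) xy) ^ 2) ^ 2) ^ ((1:ℝ)/4)) ^ 2
      ≤ 3 * normLinf h T *
          Real.sqrt (∫ xy in Msq, ∫ z in Set.Ioo (-h) h, (lapH (fun w => T w z) xy) ^ 2) := by
  set M := normLinf h T
  have hM0 : 0 ≤ M := ENNReal.toReal_nonneg
  rw [IntegrableOn, volume_restrict_Omg] at hint4 hint2
  have hXY := integral_integral_le_const_mul_of_ae hint4 hint2
    ((ae_ae_abs_le_normLinf hbdd).mono fun z hz => integral_Msq_gradSq_sq_le (hsm z)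
      (fun x y => hperx x y z) (fun x y => hpery x y z) hM0 hz)
  have hX0 : 0 ≤ ∫ xy in Msq, ∫ z in Set.Ioo (-h) h,
      ((pdx (fun w => T w z) xy) ^ 2 + (pdy (fun w => T w z) xy) ^ 2) ^ 2 :=
    integral_nonneg fun _ => integral_nonneg fun _ => by positivity
  rw [← Real.rpow_mul_natCast hX0, show (1 : ℝ) / 4 * (2 : ℕ) = 1 / 2 by norm_num,
    ← Real.sqrt_eq_rpow]
  calc _ ≤ √(9 * M ^ 2 * ∫ xy in Msq, ∫ z in Set.Ioo (-h) h, (lapH (fun w => T w z) xy) ^ 2) :=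
        Real.sqrt_le_sqrt hXY
    _ = 3 * M * √(∫ xy in Msq, ∫ z in Set.Ioo (-h) h, (lapH (fun w => T w z) xy) ^ 2) := by
        rw [show (9 : ℝ) * M ^ 2 = (3 * M) ^ 2 by ring, Real.sqrt_mul' _ (integral_nonneg fun _ =>
          integral_nonneg fun _ => by positivity), Real.sqrt_sq (by positivity)]

/-- Let `h > 0` and `Ω = (0,1)² × (-h,h)`, and let `T` be a bounded function on
`Ω`, twice continuously differentiable in the horizontal variables and periodic in `x` and
`y` with period 1. Then `‖∇_H T‖_{L⁴(Ω)}² ≤ 3 ‖T‖_{L^∞(Ω)} ‖Δ_H T‖_{L²(Ω)}`. -/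
theorem statement13 (h : ℝ) (hh : 0 < h) (T : (ℝ × ℝ) → ℝ → ℝ)
    (hsm : ∀ z : ℝ, ContDiff ℝ 2 (fun p => T p z))
    (hperx : ∀ x y z : ℝ, T (x + 1, y) z = T (x, y) z)
    (hpery : ∀ x y z : ℝ, T (x, y + 1) z = T (x, y) z)
    (hbdd : MemLp (fun p : (ℝ × ℝ) × ℝ => T p.1 p.2) ⊤ (volume.restrict (Omg h)))
    (hmeas1 : Measurable (fun p : (ℝ × ℝ) × ℝ =>
      (pdx (fun w => T w p.2) p.1) ^ 2 + (pdy (fun w => T w p.2) p.1) ^ 2))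
    (hmeas2 : Measurable (fun p : (ℝ × ℝ) × ℝ => lapH (fun w => T w p.2) p.1))
    (hint4 : IntegrableOn (fun p : (ℝ × ℝ) × ℝ =>
      ((pdx (fun w => T w p.2) p.1) ^ 2 + (pdy (fun w => T w p.2) p.1) ^ 2) ^ 2) (Omg h))
    (hint2 : IntegrableOn (fun p : (ℝ × ℝ) × ℝ => (lapH (fun w => T w p.2) p.1) ^ 2) (Omg h)) :
    ((∫ xy in Msq, ∫ z in Set.Ioo (-h) h,
          ((pdx (fun w => T w z) xy) ^ 2 + (pdy (fun w => T w z) xy) ^ 2) ^ 2) ^ ((1:ℝ)/4)) ^ 2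
      ≤ 3 * normLinf h T *
          Real.sqrt (∫ xy in Msq, ∫ z in Set.Ioo (-h) h, (lapH (fun w => T w z) xy) ^ 2) :=
  statement13_general h T hsm hperx hpery hbdd hint4 hint2
end
end
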